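/- arXiv:1008.2170 — 9 statements merged into one kernel-verified Lean document; each statement's English description precedes it below -/
import Mathlib

section
/- If a graph G has an overlap representation of size s, then the graph G' obtained from G by vertex multiplication (replacing a vertex by an independent set of vertices all with the same neighbourhood as the original vertex) also has an overlap representation of size s. -/
/-- Two finite sets overlap: they intersect and neither contains the other. -/
def Overlaps (A B : Finset ℕ) : Prop :=
  (A ∩ B).Nonempty ∧ ¬ A ⊆ B ∧ ¬ B ⊆ A

/-- An overlap representation of a graph: nonempty sets assigned to vertices such that
two vertices are adjacent iff their sets overlap. -/
def IsOverlapRep {V : Type*} (G : SimpleGraph V) (S : V → Finset ℕ) : Prop :=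
  (∀ v, (S v).Nonempty) ∧ ∀ u v, G.Adj u v ↔ Overlaps (S u) (S v)

/-- The overlap number: the minimum number of elements used in an overlap representation. -/
noncomputable def overlapNumber {V : Type*} (G : SimpleGraph V) : ℕ :=
  sInf {n | ∃ S : V → Finset ℕ, IsOverlapRep G S ∧ (⋃ v, (S v : Set ℕ)).ncard = n}

/-- Vertex multiplication preserves the existence of an overlap representation of size `s`.
Here `G'` arises from `G` by vertex multiplication: there is a surjection `p` onto the
vertices of `G` such that two vertices of `G'` are adjacent iff their images are adjacent. -/
theorem overlapRep_vertexMultiplication {V W : Type*} (G : SimpleGraph V) (G' : SimpleGraph W)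
    (p : W → V) (hp : Function.Surjective p)
    (hadj : ∀ a b, G'.Adj a b ↔ G.Adj (p a) (p b)) (s : ℕ)
    (h : ∃ S : V → Finset ℕ, IsOverlapRep G S ∧ (⋃ v, (S v : Set ℕ)).ncard = s) :
    ∃ S' : W → Finset ℕ, IsOverlapRep G' S' ∧ (⋃ w, (S' w : Set ℕ)).ncard = s := by
  obtain ⟨S, hS, hcard⟩ := h
  refine ⟨S ∘ p, ⟨fun w => hS.1 (p w), fun a b => (hadj a b).trans (hS.2 _ _)⟩, ?_⟩
  have : (⋃ w, ((S ∘ p) w : Set ℕ)) = ⋃ v, (S v : Set ℕ) := by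
    ext x
    simp only [Set.mem_iUnion, Function.comp_apply]
    constructor
    · rintro ⟨w, hw⟩; exact ⟨p w, hw⟩
    · rintro ⟨v, hv⟩; obtain ⟨w, rfl⟩ := hp v; exact ⟨w, hv⟩
  rw [this, hcard]
end

section
/- Let G = (V,E) be a graph with overlap representation {S_v : v ∈ V}, and let X, Y ⊆ V be nonempty sets such that G[X] and G[Y] are connected and no edge of G joins X to Y. Write U_X = ⋃_{x∈X} S_x. If S_x ⊆ S_y for some x ∈ X, y ∈ Y, then for every y ∈ Y, either U_X ⊆ S_y or U_X ∩ S_y = ∅. -/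
theorem not_overlaps_iff {A B : Finset ℕ} :
    ¬ Overlaps A B ↔ Disjoint A B ∨ A ⊆ B ∨ B ⊆ A := by
  rw [Overlaps, ← Finset.not_disjoint_iff_nonempty_inter]
  tauto

namespace Overlaps

variable {A B C : Finset ℕ}

theorem not_disjoint_of_subset (h : Overlaps A B) (hAC : A ⊆ C) : ¬ Disjoint B C :=
  fun hBC => (Finset.not_disjoint_iff_nonempty_inter.2 h.1) (hBC.symm.mono_left hAC)

theorem not_subset_of_subset (h : Overlaps A B) (hCA : C ⊆ A) : ¬ B ⊆ C :=
  fun hBC => h.2.2 (hBC.trans hCA)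

theorem not_subset_of_disjoint (h : Overlaps A B) (hCA : Disjoint C A) : ¬ B ⊆ C :=
  fun hBC => (Finset.not_disjoint_iff_nonempty_inter.2 h.1) (hCA.mono_left hBC).symm

theorem subset_of_subset (h : Overlaps A B) (hAC : A ⊆ C) (hBC : ¬ Overlaps B C) : B ⊆ C := by
  rcases not_overlaps_iff.1 hBC with hd | hs | hs
  · exact absurd hd (h.not_disjoint_of_subset hAC)
  · exact hs
  · exact absurd (hAC.trans hs) h.2.1

theorem subset_or_disjoint_of_not_overlaps (h : Overlaps A B) (hC : C ⊆ A ∨ Disjoint C A)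
    (hCB : ¬ Overlaps C B) : C ⊆ B ∨ Disjoint C B := by
  rcases not_overlaps_iff.1 hCB with hd | hs | hs
  · exact Or.inr hd
  · exact Or.inl hs
  · exact hC.elim (absurd hs <| h.not_subset_of_subset ·) (absurd hs <| h.not_subset_of_disjoint ·)

end Overlaps

theorem SimpleGraph.Preconnected.induce_induction {V : Type*} {G : SimpleGraph V} {X : Set V}
    (hX : (G.induce X).Preconnected) {P : V → Prop}
    (hstep : ∀ a ∈ X, ∀ b ∈ X, G.Adj a b → P a → P b) {x₀ : V} (hx₀ : x₀ ∈ X) (h₀ : P x₀) :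
    ∀ x ∈ X, P x := by
  suffices h : ∀ y : X, (G.induce X).Reachable ⟨x₀, hx₀⟩ y → P y from
    fun x hx => h ⟨x, hx⟩ (hX _ _)
  intro y hy
  rw [SimpleGraph.reachable_iff_reflTransGen] at hy
  induction hy with
  | refl => exact h₀
  | @tail a b _ hab ih => exact hstep a a.2 b b.2 hab ih

theorem IsOverlapRep.forall_subset_or_forall_disjoint {V : Type*} {G : SimpleGraph V}
    {S : V → Finset ℕ} (hS : IsOverlapRep G S) {X : Set V} (hX : (G.induce X).Preconnected)
    {T : Finset ℕ} (hT : ∀ x ∈ X, S x ⊆ T ∨ Disjoint (S x) T) :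
    (∀ x ∈ X, S x ⊆ T) ∨ ∀ x ∈ X, Disjoint (S x) T := by
  by_cases hsub : ∃ x₁ ∈ X, S x₁ ⊆ T
  · obtain ⟨x₁, hx₁, h₁⟩ := hsub
    refine Or.inl (hX.induce_induction (fun a _ b hb hab ha => ?_) hx₁ h₁)
    exact (hT b hb).resolve_right (((hS.2 a b).1 hab).not_disjoint_of_subset ha)
  · simp only [not_exists, not_and] at hsub
    exact Or.inr fun x hx => (hT x hx).resolve_left (hsub x hx)

theorem basic_contain_i_general {V : Type*} (G : SimpleGraph V) (S : V → Finset ℕ)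
    (hS : IsOverlapRep G S) (X Y : Set V)
    (hXc : (G.induce X).Connected) (hYc : (G.induce Y).Connected)
    (hsep : ∀ x ∈ X, ∀ y ∈ Y, ¬ G.Adj x y)
    (x₀ : V) (hx₀ : x₀ ∈ X) (y₀ : V) (hy₀ : y₀ ∈ Y) (hcont : S x₀ ⊆ S y₀) :
    ∀ y ∈ Y, (⋃ x ∈ X, (S x : Set ℕ)) ⊆ (S y : Set ℕ) ∨
      (⋃ x ∈ X, (S x : Set ℕ)) ∩ (S y : Set ℕ) = ∅ := by
  have hX₀ : ∀ x ∈ X, S x ⊆ S y₀ :=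
    hXc.preconnected.induce_induction
      (fun a _ b hb hab ha => ((hS.2 a b).1 hab).subset_of_subset ha
        ((hS.2 b y₀).not.1 (hsep b hb y₀ hy₀)))
      hx₀ hcont
  have hY : ∀ y ∈ Y, (∀ x ∈ X, S x ⊆ S y) ∨ ∀ x ∈ X, Disjoint (S x) (S y) :=
    hYc.preconnected.induce_induction
      (fun a _ b hb hab ha => hS.forall_subset_or_forall_disjoint hXc.preconnected
        fun x hx => ((hS.2 a b).1 hab).subset_or_disjoint_of_not_overlaps
          (ha.imp (· x hx) (· x hx)) ((hS.2 x b).not.1 (hsep x hx b hb)))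
      hy₀ (Or.inl hX₀)
  intro y hy
  refine (hY y hy).imp (fun h => Set.iUnion₂_subset fun x hx => Finset.coe_subset.2 (h x hx))
    fun h => ?_
  rw [← Set.disjoint_iff_inter_eq_empty, Set.disjoint_iUnion₂_left]
  exact fun x hx => Finset.disjoint_coe.2 (h x hx)

/-- Part (i) of the basic containment lemma: if `G[X]` and `G[Y]` are connected, no edge
joins `X` to `Y`, and some `S x ⊆ S y` with `x ∈ X`, `y ∈ Y`, then for every `y ∈ Y` the
union `U_X` is either contained in `S y` or disjoint from it. -/
theorem basic_contain_i {V : Type*} (G : SimpleGraph V) (S : V → Finset ℕ)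
    (hS : IsOverlapRep G S) (X Y : Set V) (hX : X.Nonempty) (hY : Y.Nonempty)
    (hXc : (G.induce X).Connected) (hYc : (G.induce Y).Connected)
    (hsep : ∀ x ∈ X, ∀ y ∈ Y, ¬ G.Adj x y)
    (x₀ : V) (hx₀ : x₀ ∈ X) (y₀ : V) (hy₀ : y₀ ∈ Y) (hcont : S x₀ ⊆ S y₀) :
    ∀ y ∈ Y, (⋃ x ∈ X, (S x : Set ℕ)) ⊆ (S y : Set ℕ) ∨
      (⋃ x ∈ X, (S x : Set ℕ)) ∩ (S y : Set ℕ) = ∅ :=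
  basic_contain_i_general G S hS X Y hXc hYc hsep x₀ hx₀ y₀ hy₀ hcont
end

section
/- Let G = (V,E) be a graph with overlap representation {S_v : v ∈ V}, and let X, Y ⊆ V be nonempty sets such that G[X] and G[Y] are connected and no edge of G joins X to Y. If S_x ⊆ S_y for some x ∈ X, y ∈ Y, and moreover |X| > 1 or |Y| > 1, then for all x ∈ X and y ∈ Y, S_y ⊄ S_x. -/
lemma walk_prop {V : Type*} {G : SimpleGraph V} {P : V → Prop}
    (h : ∀ a b, G.Adj a b → P a → P b) :
    ∀ {a b : V}, G.Walk a b → P a → P b := by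
  intro a b w
  induction w with
  | nil => exact id
  | cons h' p ih => exact fun ha => ih (h _ _ h' ha)

lemma exists_adj_of_walk {α : Type*} {G : SimpleGraph α} {a b : α}
    (w : G.Walk a b) (hne : a ≠ b) : ∃ c, G.Adj a c := by
  cases w with
  | nil => exact absurd rfl hne
  | cons h p => exact ⟨_, h⟩

/-- Part (ii) of the basic containment lemma: if `G[X]` and `G[Y]` are connected, no edge
joins `X` to `Y`, some `S x ⊆ S y` with `x ∈ X`, `y ∈ Y`, and `|X| > 1` or `|Y| > 1`, then
no set of a vertex of `Y` is contained in a set of a vertex of `X`. -/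
theorem basic_contain_ii {V : Type*} (G : SimpleGraph V) (S : V → Finset ℕ)
    (hS : IsOverlapRep G S) (X Y : Set V) (hX : X.Nonempty) (hY : Y.Nonempty)
    (hXc : (G.induce X).Connected) (hYc : (G.induce Y).Connected)
    (hsep : ∀ x ∈ X, ∀ y ∈ Y, ¬ G.Adj x y)
    (x₀ : V) (hx₀ : x₀ ∈ X) (y₀ : V) (hy₀ : y₀ ∈ Y) (hcont : S x₀ ⊆ S y₀)
    (hbig : X.Nontrivial ∨ Y.Nontrivial) :
    ∀ x ∈ X, ∀ y ∈ Y, ¬ S y ⊆ S x := by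
  intro x hx y hy hyx
  -- everything in X is contained in S y₀
  have hA : ∀ x' ∈ X, S x' ⊆ S y₀ := by
    intro x' hx'
    obtain ⟨w⟩ := hXc ⟨x₀, hx₀⟩ ⟨x', hx'⟩
    refine walk_prop (P := fun a : X => S a ⊆ S y₀) ?_ w hcont
    rintro ⟨a, haX⟩ ⟨b, hbX⟩ hab hsa
    have hGab : G.Adj a b := hab
    obtain ⟨hne, hab1, hab2⟩ := (hS.2 a b).mp hGab
    have hnadj : ¬ Overlaps (S b) (S y₀) :=
      fun h => (hsep b hbX y₀ hy₀) ((hS.2 b y₀).mpr h)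
    have hint : (S b ∩ S y₀).Nonempty := by
      obtain ⟨t, ht⟩ := hne
      rw [Finset.mem_inter] at ht
      exact ⟨t, Finset.mem_inter.mpr ⟨ht.2, hsa ht.1⟩⟩
    by_contra hnb
    exact hnadj ⟨hint, hnb, fun hy0b => hab1 (hsa.trans hy0b)⟩
  -- everything in Y is contained in S x
  have hB : ∀ y' ∈ Y, S y' ⊆ S x := by
    intro y' hy'
    obtain ⟨w⟩ := hYc ⟨y, hy⟩ ⟨y', hy'⟩
    refine walk_prop (P := fun a : Y => S a ⊆ S x) ?_ w hyx
    rintro ⟨a, haY⟩ ⟨b, hbY⟩ hab hsa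
    have hGab : G.Adj a b := hab
    obtain ⟨hne, hab1, hab2⟩ := (hS.2 a b).mp hGab
    have hnadj : ¬ Overlaps (S b) (S x) :=
      fun h => (hsep x hx b hbY) (((hS.2 b x).mpr h).symm)
    have hint : (S b ∩ S x).Nonempty := by
      obtain ⟨t, ht⟩ := hne
      rw [Finset.mem_inter] at ht
      exact ⟨t, Finset.mem_inter.mpr ⟨ht.2, hsa ht.1⟩⟩
    by_contra hnb
    exact hnadj ⟨hint, hnb, fun hxb => hab1 (hsa.trans hxb)⟩
  have heq : S x = S y₀ := Finset.Subset.antisymm (hA x hx) (hB y₀ hy₀)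
  rcases hbig with hXb | hYb
  · obtain ⟨z, hz, hzx⟩ := hXb.exists_ne x
    obtain ⟨w⟩ := hXc ⟨x, hx⟩ ⟨z, hz⟩
    obtain ⟨c, hc⟩ := exists_adj_of_walk w (fun h => hzx (congrArg Subtype.val h).symm)
    have hGc : G.Adj x c.val := hc
    obtain ⟨_, _, hns⟩ := (hS.2 x c.val).mp hGc
    exact hns (heq ▸ hA c.val c.property)
  · obtain ⟨z, hz, hzy⟩ := hYb.exists_ne y₀
    obtain ⟨w⟩ := hYc ⟨y₀, hy₀⟩ ⟨z, hz⟩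
    obtain ⟨c, hc⟩ := exists_adj_of_walk w (fun h => hzy (congrArg Subtype.val h).symm)
    have hGc : G.Adj y₀ c.val := hc
    obtain ⟨_, _, hns⟩ := (hS.2 y₀ c.val).mp hGc
    exact hns (heq ▸ hB c.val c.property)
end

section
/- Let G = (V,E) be a graph with overlap representation {S_v : v ∈ V}. Fix v ∈ V, let u ∈ V \ N[v], and let A_v(u) be the vertex set of the connected component of G[V \ N[v]] containing u. If S_u ⊆ S_v, then ⋃_{w ∈ A_v(u)} S_w ⊆ S_v. -/
/-- If `u ∉ N[v]` and `S u ⊆ S v`, then the set of every vertex in the connected component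
of `G[V \ N[v]]` containing `u` is contained in `S v`. -/
theorem contain_connected {V : Type*} (G : SimpleGraph V) (S : V → Finset ℕ)
    (hS : IsOverlapRep G S) (v u : V) (huv : u ≠ v) (hadj : ¬ G.Adj v u)
    (hsub : S u ⊆ S v) :
    ∀ w : ({w | w ≠ v ∧ ¬ G.Adj v w} : Set V),
      (G.induce {w | w ≠ v ∧ ¬ G.Adj v w}).Reachable ⟨u, huv, hadj⟩ w →
      S w.1 ⊆ S v := by
  have step : ∀ a b : ({w | w ≠ v ∧ ¬ G.Adj v w} : Set V),
      (G.induce {w | w ≠ v ∧ ¬ G.Adj v w}).Adj a b → S a.1 ⊆ S v → S b.1 ⊆ S v := by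
    intro a b hab ha
    have hGab : G.Adj a.1 b.1 := hab
    have hov : Overlaps (S a.1) (S b.1) := (hS.2 _ _).mp hGab
    by_contra hnb
    have hvb : G.Adj v b.1 := by
      apply (hS.2 v b.1).mpr
      refine ⟨?_, ?_, hnb⟩
      · obtain ⟨x, hx⟩ := hov.1
        simp only [Finset.mem_inter] at hx
        exact ⟨x, Finset.mem_inter.mpr ⟨ha hx.1, hx.2⟩⟩
      · intro hvsub
        exact hov.2.1 (fun x hx => hvsub (ha hx))
    exact b.2.2 hvb
  have main : ∀ (a b : ({w | w ≠ v ∧ ¬ G.Adj v w} : Set V))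
      (_ : (G.induce {w | w ≠ v ∧ ¬ G.Adj v w}).Walk a b), S a.1 ⊆ S v → S b.1 ⊆ S v := by
    intro a b p
    induction p with
    | nil => exact id
    | cons h _ ih => intro ha; exact ih (step _ _ h ha)
  intro w hw
  obtain ⟨p⟩ := hw
  exact main _ _ p hsub
end

section
/- For m ≥ 1, the maximum size of a family C of subsets of {1,...,m} such that no member contains another and any two members have nonempty intersection is C(m, ⌊(m+2)/2⌋). -/
/-!
The layer of `(⌊m/2⌋ + 1)`-sets is an intersecting antichain of the claimed size, and the LYM
inequality bounds every antichain whose members have at least `⌊m/2⌋ + 1` elements by the same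
number. An intersecting antichain whose smallest members have `l ≤ m/2` elements can be raised
without losing members: replace its `l`-sets by as many sets of their upper shadow, which is large
enough because an intersecting `l`-uniform family `𝒜` satisfies `#𝒜 ≤ #∂⁺𝒜`. Passing to
complements, this is local LYM when `2l < m`. When `m = 2l`, `𝒜` contains at most one set of each
complementary pair, so its complement family has at most `C(m - 1, l)` members; Kruskal–Katona
compares it with an initial colex segment, which then avoids the last point and whose shadow is
at least as large by double counting.
-/

open Finset Finset.Colex
open scoped FinsetFamily

theorem Finset.exists_subset_card_eq_forall_lt_mem {β : Type*} [LinearOrder β] (s : Finset β)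
    {d : ℕ} (hd : d ≤ #s) : ∃ u ⊆ s, #u = d ∧ ∀ x ∈ u, ∀ y ∈ s, y < x → y ∈ u := by
  set e := s.orderEmbOfFin rfl
  refine ⟨univ.map ((Fin.castLEEmb hd).trans e.toEmbedding), ?_, by simp, ?_⟩
  · rintro _ hx
    obtain ⟨i, -, rfl⟩ := mem_map.1 hx
    exact s.orderEmbOfFin_mem rfl _
  · simp only [mem_map, mem_univ, true_and, forall_exists_index, forall_apply_eq_imp_iff]
    intro i y hy hlt
    obtain ⟨j, rfl⟩ : y ∈ Set.range e := by rwa [s.range_orderEmbOfFin]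
    have hji : (j : ℕ) < i := e.lt_iff_lt.1 hlt
    exact ⟨⟨j, by omega⟩, rfl⟩

theorem Finset.exists_isInitSeg_card_eq_forall_last_notMem {n r d : ℕ} (hd : d ≤ n.choose r) :
    ∃ 𝒞 : Finset (Finset (Fin (n + 1))), #𝒞 = d ∧ IsInitSeg 𝒞 r ∧ ∀ A ∈ 𝒞, Fin.last n ∉ A := by
  set T := (powersetCard r (univ.erase (Fin.last n))).map toColex.toEmbedding
  have mem_T {A} : toColex A ∈ T ↔ #A = r ∧ Fin.last n ∉ A := by
    simp [T, subset_erase, and_comm]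
  obtain ⟨u, huT, hu, hlow⟩ := T.exists_subset_card_eq_forall_lt_mem (d := d) (by simpa [T])
  have mem_u {A} (hA : toColex A ∈ u) : #A = r ∧ Fin.last n ∉ A := mem_T.1 (huT hA)
  refine ⟨u.map toColex.symm.toEmbedding, by simpa, ⟨fun A hA ↦ ?_, fun s t hs ⟨hts, ht⟩ ↦ ?_⟩,
    fun A hA ↦ ?_⟩
  · exact (mem_u (by simpa using hA)).1
  · rw [mem_map_equiv, Equiv.symm_symm] at hs ⊢
    -- in colex, every set containing the largest point lies above every set avoiding it
    have hlast : Fin.last n ∉ t := fun hlast ↦ hts.not_gt <|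
      toColex_lt_toColex_iff_exists_forall_lt.2 ⟨_, hlast, (mem_u hs).2,
        fun b hb _ ↦ (Fin.le_last b).lt_of_ne (ne_of_mem_of_not_mem hb (mem_u hs).2)⟩
    exact hlow _ hs _ (mem_T.2 ⟨ht, hlast⟩) hts
  · exact (mem_u (by simpa using hA)).2

theorem Finset.card_mul_le_card_shadow_mul_of_forall_notMem {α : Type*} [DecidableEq α]
    [Fintype α] {𝒜 : Finset (Finset α)} {r : ℕ} (h𝒜 : (𝒜 : Set (Finset α)).Sized r) {a : α}
    (ha : ∀ s ∈ 𝒜, a ∉ s) : #𝒜 * r ≤ #(∂ 𝒜) * (Fintype.card α - r) := by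
  refine card_mul_le_card_mul (fun s t ↦ t ⊆ s) (fun s hs ↦ ?_) (fun t ht ↦ ?_)
  · rw [← h𝒜 hs, ← card_image_of_injOn s.erase_injOn]
    refine card_le_card ?_
    simp_rw [image_subset_iff, mem_bipartiteAbove]
    exact fun x hx ↦ ⟨erase_mem_shadow hs hx, erase_subset _ _⟩
  obtain ⟨x, hxt, hxt𝒜⟩ := mem_shadow_iff_insert_mem.1 ht
  have hat : a ∉ t := fun hat ↦ ha _ hxt𝒜 (mem_insert_of_mem hat)
  have hcard : #(insert a t) = r := by
    rw [card_insert_of_notMem hat, ← card_insert_of_notMem hxt, h𝒜 hxt𝒜]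
  calc #(𝒜.bipartiteBelow (fun s t ↦ t ⊆ s) t)
      ≤ #(((insert a t)ᶜ).image (insert · t)) := card_le_card fun s hs ↦ by
        obtain ⟨hs𝒜, hts⟩ := (mem_bipartiteBelow _).1 hs
        obtain ⟨y, hyt, rfl⟩ := exists_eq_insert_iff.2
          ⟨hts, by rw [h𝒜 hs𝒜, ← h𝒜 hxt𝒜, card_insert_of_notMem hxt]⟩
        refine mem_image_of_mem _ (mem_compl.2 fun hy ↦ ?_)
        obtain rfl | hy := mem_insert.1 hy
        exacts [ha _ hs𝒜 (mem_insert_self _ _), hyt hy]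
    _ ≤ #((insert a t)ᶜ) := card_image_le
    _ = Fintype.card α - r := by rw [card_compl, hcard]

theorem Finset.card_le_card_shadow_of_card_le_choose {n r : ℕ}
    {ℬ : Finset (Finset (Fin (n + 1)))} (hℬ : (ℬ : Set (Finset (Fin (n + 1)))).Sized r)
    (hcard : #ℬ ≤ n.choose r) (hnr : n + 1 ≤ 2 * r) : #ℬ ≤ #(∂ ℬ) := by
  obtain ⟨𝒞, h𝒞, hinit, hlast⟩ := exists_isInitSeg_card_eq_forall_last_notMem hcard
  have hKK : #(∂ 𝒞) ≤ #(∂ ℬ) := kruskal_katona hℬ h𝒞.le hinit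
  have hcount := card_mul_le_card_shadow_mul_of_forall_notMem hinit.1 hlast
  rw [Fintype.card_fin] at hcount
  rw [← h𝒞]
  refine (Nat.le_of_mul_le_mul_right (hcount.trans ?_) (by omega : 0 < r)).trans hKK
  exact Nat.mul_le_mul_left _ (by omega)

theorem Finset.card_le_card_upShadow_of_intersecting {m l : ℕ} {𝒜 : Finset (Finset (Fin m))}
    (h𝒜 : (𝒜 : Set (Finset (Fin m))).Sized l) (hint : (𝒜 : Set (Finset (Fin m))).Intersecting)
    (hlm : 2 * l ≤ m) : #𝒜 ≤ #(∂⁺ 𝒜) := by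
  rw [← card_compls 𝒜, ← card_compls (∂⁺ 𝒜), ← shadow_compls]
  have hℬ : (𝒜ᶜˢ : Set (Finset (Fin m))).Sized (m - l) := by simpa using h𝒜.compls
  obtain hlt | rfl := hlm.lt_or_eq
  · have hLYM := local_lubell_yamamoto_meshalkin_inequality_mul hℬ
    rw [Fintype.card_fin, Nat.sub_sub_self (by omega)] at hLYM
    exact Nat.le_of_mul_le_mul_right (hLYM.trans (Nat.mul_le_mul_left _ (by omega)))
      (by omega : 0 < m - l)
  obtain rfl | ⟨A, hA⟩ := 𝒜.eq_empty_or_nonempty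
  · simp
  have hl : l ≠ 0 := by
    rw [← h𝒜 hA, card_ne_zero, nonempty_iff_ne_empty]
    exact hint.ne_bot hA
  obtain ⟨j, rfl⟩ := Nat.exists_eq_add_one_of_ne_zero hl
  have hℬ' : (𝒜ᶜˢ : Set (Finset (Fin (2 * (j + 1))))).Sized (j + 1) := by
    rwa [show 2 * (j + 1) - (j + 1) = j + 1 by omega] at hℬ
  have hdisj : Disjoint 𝒜 𝒜ᶜˢ := hint.disjoint_map_compl
  have hlevel : #𝒜 + #𝒜ᶜˢ ≤ (2 * j + 1 + 1).choose (j + 1) := by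
    rw [← card_union_of_disjoint hdisj]
    have hsized : ((𝒜 ∪ 𝒜ᶜˢ : Finset _) : Set (Finset (Fin (2 * (j + 1))))).Sized (j + 1) := by
      rw [coe_union, Set.sized_union]
      exact ⟨h𝒜, hℬ'⟩
    convert hsized.card_le using 2
    simp only [Fintype.card_fin]
    ring
  have hsmall : #𝒜ᶜˢ ≤ (2 * j + 1).choose (j + 1) := by
    rw [Nat.choose_succ_succ', ← Nat.choose_symm_half, card_compls] at hlevel
    rw [card_compls]
    omega
  exact card_le_card_shadow_of_card_le_choose (n := 2 * j + 1) hℬ' hsmall (by omega)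

theorem Finset.exists_intersecting_antichain_card_eq_forall_lt_card {m l : ℕ}
    {𝒜 : Finset (Finset (Fin m))} (hanti : IsAntichain (· ⊆ ·) (𝒜 : Set (Finset (Fin m))))
    (hint : (𝒜 : Set (Finset (Fin m))).Intersecting) (hl : ∀ A ∈ 𝒜, l ≤ #A) (hlm : 2 * l ≤ m) :
    ∃ ℬ : Finset (Finset (Fin m)), IsAntichain (· ⊆ ·) (ℬ : Set (Finset (Fin m))) ∧
      (ℬ : Set (Finset (Fin m))).Intersecting ∧ #ℬ = #𝒜 ∧ ∀ B ∈ ℬ, l < #B := by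
  set 𝒜₀ := {A ∈ 𝒜 | #A = l}
  have h𝒜₀ : (𝒜₀ : Set (Finset (Fin m))).Sized l := fun A hA ↦ (mem_filter.1 hA).2
  obtain ⟨𝒮, h𝒮, h𝒮card⟩ := exists_subset_card_eq <|
    card_le_card_upShadow_of_intersecting h𝒜₀ (hint.mono (filter_subset _ _)) hlm
  have mem_𝒮 {B} (hB : B ∈ 𝒮) : #B = l + 1 ∧ ∃ A ∈ 𝒜, A ⊂ B := by
    obtain ⟨A, hA, hAB⟩ := exists_subset_of_mem_upShadow (h𝒮 hB)
    have hBcard : #B = l + 1 := h𝒜₀.upShadow (h𝒮 hB)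
    refine ⟨hBcard, A, mem_of_mem_filter _ hA, hAB.ssubset_of_ne ?_⟩
    rintro rfl
    have := h𝒜₀ hA
    omega
  set ℬ := {A ∈ 𝒜 | #A ≠ l} ∪ 𝒮
  have hℬ : ∀ B ∈ ℬ, l < #B ∧ ∃ A ∈ 𝒜, A ⊆ B := by
    intro B hB
    obtain hB | hB := mem_union.1 hB
    · obtain ⟨hB𝒜, hBl⟩ := mem_filter.1 hB
      exact ⟨(hl B hB𝒜).lt_of_ne' hBl, B, hB𝒜, subset_rfl⟩
    · obtain ⟨hBl, A, hA, hAB⟩ := mem_𝒮 hB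
      exact ⟨hBl ▸ Nat.lt_succ_self l, A, hA, hAB.subset⟩
  have hdisj : Disjoint {A ∈ 𝒜 | #A ≠ l} 𝒮 := disjoint_right.2 fun B hB hB𝒜 ↦ by
    obtain ⟨-, A, hA, hAB⟩ := mem_𝒮 hB
    exact hanti hA (mem_of_mem_filter _ hB𝒜) hAB.ne hAB.subset
  refine ⟨ℬ, fun B₁ hB₁ B₂ hB₂ hne hsub ↦ ?_, fun B₁ hB₁ B₂ hB₂ ↦ ?_, ?_, fun B hB ↦ (hℬ B hB).1⟩
  · have hlt : #B₁ < #B₂ := card_lt_card (hsub.ssubset_of_ne hne)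
    obtain hB₂ | hB₂ := mem_union.1 hB₂
    · obtain ⟨A₁, hA₁, hAB₁⟩ := (hℬ B₁ hB₁).2
      have hAB₂ : A₁ ⊂ B₂ := hAB₁.trans_ssubset (hsub.ssubset_of_ne hne)
      exact hanti hA₁ (mem_of_mem_filter _ hB₂) hAB₂.ne hAB₂.subset
    · have := (hℬ B₁ hB₁).1
      have := (mem_𝒮 hB₂).1
      omega
  · obtain ⟨A₁, hA₁, hAB₁⟩ := (hℬ B₁ hB₁).2
    obtain ⟨A₂, hA₂, hAB₂⟩ := (hℬ B₂ hB₂).2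
    exact fun h ↦ hint hA₁ hA₂ (h.mono hAB₁ hAB₂)
  · rw [card_union_of_disjoint hdisj, h𝒮card, add_comm]
    exact card_filter_add_card_filter_not _

theorem Nat.choose_le_choose_of_le_of_le_two_mul {n k r : ℕ} (hkr : k ≤ r) (hnk : n ≤ 2 * k) :
    n.choose r ≤ n.choose k := by
  induction r, hkr using Nat.le_induction with
  | base => rfl
  | succ r hkr ih =>
    refine le_trans (Nat.le_of_mul_le_mul_right ?_ r.succ_pos) ih
    rw [Nat.choose_succ_right_eq]
    exact Nat.mul_le_mul_left _ (by omega)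

theorem IsAntichain.card_le_choose_of_forall_le_card {α : Type*} [Fintype α]
    {𝒜 : Finset (Finset α)} {k : ℕ} (h𝒜 : IsAntichain (· ⊆ ·) (𝒜 : Set (Finset α)))
    (hk : ∀ A ∈ 𝒜, k ≤ #A) (hαk : Fintype.card α ≤ 2 * k) :
    #𝒜 ≤ (Fintype.card α).choose k := by
  obtain rfl | ⟨A, hA⟩ := 𝒜.eq_empty_or_nonempty
  · simp
  have hpos : 0 < ((Fintype.card α).choose k : ℚ≥0) :=
    Nat.cast_pos.2 <| Nat.choose_pos <| (hk A hA).trans A.card_le_univ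
  have h := calc
    ∑ _s ∈ 𝒜, ((Fintype.card α).choose k : ℚ≥0)⁻¹
    _ ≤ ∑ s ∈ 𝒜, ((Fintype.card α).choose #s : ℚ≥0)⁻¹ := by
      gcongr with s hs
      · exact mod_cast Nat.choose_pos s.card_le_univ
      · exact Nat.choose_le_choose_of_le_of_le_two_mul (hk s hs) hαk
    _ ≤ 1 := lubell_yamamoto_meshalkin_inequality_sum_inv_choose h𝒜
  simpa [mul_inv_le_iff₀' hpos] using h

theorem IsAntichain.card_le_choose_of_intersecting {m : ℕ} {𝒜 : Finset (Finset (Fin m))}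
    (hanti : IsAntichain (· ⊆ ·) (𝒜 : Set (Finset (Fin m))))
    (hint : (𝒜 : Set (Finset (Fin m))).Intersecting) : #𝒜 ≤ m.choose (m / 2 + 1) := by
  suffices ∀ l ≤ m / 2 + 1, ∀ 𝒜 : Finset (Finset (Fin m)),
      IsAntichain (· ⊆ ·) (𝒜 : Set (Finset (Fin m))) → (𝒜 : Set (Finset (Fin m))).Intersecting →
      (∀ A ∈ 𝒜, l ≤ #A) → #𝒜 ≤ m.choose (m / 2 + 1) from
    this 0 (Nat.zero_le _) 𝒜 hanti hint fun _ _ ↦ Nat.zero_le _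
  intro l hl
  induction hl using Nat.decreasingInduction with
  | self =>
    intro 𝒜 hanti _ hk
    simpa using hanti.card_le_choose_of_forall_le_card hk (by rw [Fintype.card_fin]; omega)
  | of_succ l hl ih =>
    intro 𝒜 hanti hint hle
    obtain ⟨ℬ, hℬanti, hℬint, hcard, hlt⟩ :=
      exists_intersecting_antichain_card_eq_forall_lt_card hanti hint hle (by omega)
    exact hcard ▸ ih ℬ hℬanti hℬint hlt

theorem milner_p_one_general (m : ℕ) :
    IsGreatest {n | ∃ C : Finset (Finset (Fin m)),
        (∀ A ∈ C, ∀ B ∈ C, A ≠ B → ¬ A ⊆ B) ∧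
        (∀ A ∈ C, ∀ B ∈ C, (A ∩ B).Nonempty) ∧
        C.card = n}
      (Nat.choose m ((m + 2) / 2)) := by
  have hk : (m + 2) / 2 = m / 2 + 1 := by omega
  refine ⟨⟨powersetCard ((m + 2) / 2) univ, fun A hA B hB hne hAB ↦ ?_, fun A hA B hB ↦ ?_,
    by simp⟩, ?_⟩
  · rw [mem_powersetCard] at hA hB
    exact hne (eq_of_subset_of_card_le hAB (hB.2.trans hA.2.symm).le)
  · rw [mem_powersetCard] at hA hB
    exact inter_nonempty_of_card_lt_card_add_card (subset_univ A) (subset_univ B)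
      (by rw [card_univ, Fintype.card_fin]; omega)
  · rintro _ ⟨C, hanti, hint, rfl⟩
    rw [hk]
    exact IsAntichain.card_le_choose_of_intersecting (fun A hA B hB ↦ hanti A hA B hB)
      fun A hA B hB ↦ not_disjoint_iff_nonempty_inter.2 (hint A hA B hB)

/-- Milner's theorem for `p = 1`: the maximum size of a family of subsets of an `m`-element
set that is an antichain under inclusion and pairwise intersecting is `C(m, ⌊(m+2)/2⌋)`. -/
theorem milner_p_one (m : ℕ) (hm : 1 ≤ m) :
    IsGreatest {n | ∃ C : Finset (Finset (Fin m)),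
        (∀ A ∈ C, ∀ B ∈ C, A ≠ B → ¬ A ⊆ B) ∧
        (∀ A ∈ C, ∀ B ∈ C, (A ∩ B).Nonempty) ∧
        C.card = n}
      (Nat.choose m ((m + 2) / 2)) :=
  milner_p_one_general m
end

section
/- For n ≥ 1, the overlap number of the complete graph K_n equals the minimum m such that n ≤ C(m, ⌊(m+2)/2⌋). -/
open Finset
open scoped FinsetFamily

theorem Set.Intersecting.of_forall_exists_le {α : Type*} [SemilatticeInf α] [OrderBot α]
    {s t : Set α} (hs : s.Intersecting) (h : ∀ b ∈ t, ∃ a ∈ s, a ≤ b) : t.Intersecting := by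
  intro b hb c hc hbc
  obtain ⟨a, ha, hab⟩ := h b hb
  obtain ⟨a', ha', hac⟩ := h c hc
  exact hs ha ha' (hbc.mono hab hac)

namespace Finset

theorem card_le_card_sdiff_union {β : Type*} [DecidableEq β] {s t u : Finset β} (hts : t ⊆ s)
    (hsu : Disjoint s u) (htu : #t ≤ #u) : #s ≤ #(s \ t ∪ u) := by
  rw [card_union_of_disjoint (hsu.mono_left sdiff_subset), card_sdiff_of_subset hts]
  have := card_le_card hts
  omega

section Shadow
variable {α : Type*} [DecidableEq α] {𝒜 ℬ : Finset (Finset α)} {T : Finset α} {r k : ℕ}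

theorem card_mul_le_card_shadow_mul_of_subset (hT : ∀ A ∈ 𝒜, A ⊆ T)
    (h𝒜 : (𝒜 : Set (Finset α)).Sized r) : #𝒜 * r ≤ #(∂ 𝒜) * (#T - r + 1) := by
  -- Double count the pairs `B ⊆ A` with `A ∈ 𝒜`, `B ∈ ∂ 𝒜`: every `A` lies above `r` of the `B`,
  -- and every `B` below at most `#T - r + 1` of the `A`, all of the form `insert c B` with `c ∈ T`.
  refine card_mul_le_card_mul' (· ⊆ ·) (fun A hA => ?_) (fun B hB => ?_)
  · rw [← h𝒜 hA, ← card_image_of_injOn A.erase_injOn]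
    refine card_le_card ?_
    simp_rw [image_subset_iff, mem_bipartiteBelow]
    exact fun a ha => ⟨erase_mem_shadow hA ha, erase_subset _ _⟩
  · obtain ⟨A, hA, a, ha, rfl⟩ := mem_shadow_iff.1 hB
    have hsub : bipartiteAbove (· ⊆ ·) 𝒜 (A.erase a) ⊆
        (T \ A.erase a).image (insert · (A.erase a)) := by
      intro C hC
      rw [mem_bipartiteAbove] at hC
      have hr : 1 ≤ r := h𝒜 hA ▸ card_pos.2 ⟨a, ha⟩
      obtain ⟨c, hc, rfl⟩ := exists_eq_insert_iff.2
        ⟨hC.2, by rw [h𝒜 hC.1, card_erase_of_mem ha, h𝒜 hA]; omega⟩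
      exact mem_image_of_mem _ (mem_sdiff.2 ⟨hT _ hC.1 (mem_insert_self _ _), hc⟩)
    calc #(bipartiteAbove (· ⊆ ·) 𝒜 (A.erase a))
        ≤ #(T \ A.erase a) := (card_le_card hsub).trans card_image_le
      _ = #T - (r - 1) := by
        rw [card_sdiff_of_subset ((erase_subset _ _).trans (hT A hA)), card_erase_of_mem ha, h𝒜 hA]
      _ ≤ #T - r + 1 := by omega

theorem card_le_card_shadow_of_subset (hT : ∀ A ∈ 𝒜, A ⊆ T)
    (h𝒜 : (𝒜 : Set (Finset α)).Sized r) (hr : #T + 1 ≤ 2 * r) : #𝒜 ≤ #(∂ 𝒜) := by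
  have hlym := card_mul_le_card_shadow_mul_of_subset hT h𝒜
  have : #(∂ 𝒜) * (#T - r + 1) ≤ #(∂ 𝒜) * r := Nat.mul_le_mul_left _ (by omega)
  exact Nat.le_of_mul_le_mul_right (hlym.trans this) (by omega)

theorem card_le_card_upShadow_of_sized [Fintype α] (h𝒜 : (𝒜 : Set (Finset α)).Sized r)
    (hr : 2 * r + 1 ≤ Fintype.card α) : #𝒜 ≤ #(∂⁺ 𝒜) := by
  simpa using card_le_card_shadow_of_subset (fun A _ => subset_univ A) h𝒜.compls
    (by rw [card_univ]; omega)

theorem _root_.IsAntichain.disjoint_upShadow [Fintype α]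
    (h𝒜 : IsAntichain (· ⊆ ·) (𝒜 : Set (Finset α))) (hℬ : ℬ ⊆ 𝒜) : Disjoint 𝒜 (∂⁺ ℬ) := by
  refine disjoint_right.2 fun B hB hB𝒜 => ?_
  obtain ⟨A, hA, hAB, hcard⟩ := mem_upShadow_iff_exists_mem_card_add_one.1 hB
  exact h𝒜 (hℬ hA) hB𝒜 (by rintro rfl; omega) hAB

theorem _root_.IsAntichain.disjoint_shadow (h𝒜 : IsAntichain (· ⊆ ·) (𝒜 : Set (Finset α)))
    (hℬ : ℬ ⊆ 𝒜) : Disjoint 𝒜 (∂ ℬ) := by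
  refine disjoint_right.2 fun B hB hB𝒜 => ?_
  obtain ⟨A, hA, hBA, hcard⟩ := mem_shadow_iff_exists_mem_card_add_one.1 hB
  exact h𝒜 hB𝒜 (hℬ hA) (by rintro rfl; omega) hBA

theorem _root_.IsAntichain.sdiff_slice_union_upShadow [Fintype α]
    (h𝒜 : IsAntichain (· ⊆ ·) (𝒜 : Set (Finset α))) (hk : ∀ A ∈ 𝒜, k ≤ #A) :
    IsAntichain (· ⊆ ·) ((𝒜 \ 𝒜 # k ∪ ∂⁺ (𝒜 # k) : Finset (Finset α)) : Set (Finset α)) := by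
  rw [coe_union, isAntichain_union]
  refine ⟨h𝒜.subset (by simp), sized_slice.upShadow.isAntichain, fun A hA B hB hAB => ?_⟩
  simp only [coe_sdiff, Set.mem_sdiff, mem_coe, mem_slice, not_and] at hA
  obtain ⟨C, hC, hCB, hcard⟩ := mem_upShadow_iff_exists_mem_card_add_one.1 hB
  rw [mem_slice] at hC
  have := hk A hA.1
  have := hA.2 hA.1
  refine ⟨fun hAB' => hAB (eq_of_subset_of_card_le hAB' (by omega)), fun hBA => ?_⟩
  exact h𝒜 hC.1 hA.1 (by rintro rfl; omega) (hCB.trans hBA)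

theorem _root_.IsAntichain.sdiff_slice_union_shadow
    (h𝒜 : IsAntichain (· ⊆ ·) (𝒜 : Set (Finset α))) (hk : ∀ A ∈ 𝒜, #A ≤ k) :
    IsAntichain (· ⊆ ·) ((𝒜 \ 𝒜 # k ∪ ∂ (𝒜 # k) : Finset (Finset α)) : Set (Finset α)) := by
  rw [coe_union, isAntichain_union]
  refine ⟨h𝒜.subset (by simp), sized_slice.shadow.isAntichain, fun A hA B hB hAB => ?_⟩
  simp only [coe_sdiff, Set.mem_sdiff, mem_coe, mem_slice, not_and] at hA
  obtain ⟨C, hC, hBC, hcard⟩ := mem_shadow_iff_exists_mem_card_add_one.1 hB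
  rw [mem_slice] at hC
  have := hk A hA.1
  have := hA.2 hA.1
  refine ⟨fun hAB' => h𝒜 hA.1 hC.1 (by rintro rfl; omega) (hAB'.trans hBC), fun hBA => ?_⟩
  exact hAB (eq_of_subset_of_card_le hBA (by omega)).symm

end Shadow

namespace Colex
variable {α : Type*} [LinearOrder α] {𝒜 𝒞 : Finset (Finset α)} {A : Finset α} {r s : ℕ}

theorem IsInitSeg.erase_max (h𝒜 : IsInitSeg 𝒜 r) (hA : A ∈ 𝒜)
    (hmax : ∀ B ∈ 𝒜, toColex B ≤ toColex A) : IsInitSeg (𝒜.erase A) r :=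
  ⟨h𝒜.1.mono (erase_subset _ _), fun B C hB hC =>
    mem_erase.2 ⟨by rintro rfl; exact (hC.1.trans_le (hmax B (mem_of_mem_erase hB))).false,
      h𝒜.2 (mem_of_mem_erase hB) hC⟩⟩

theorem IsInitSeg.exists_card_eq (h𝒜 : IsInitSeg 𝒜 r) (hs : s ≤ #𝒜) :
    ∃ 𝒞 : Finset (Finset α), IsInitSeg 𝒞 r ∧ #𝒞 = s := by
  induction 𝒜 using Finset.strongInduction with
  | H 𝒜 ih =>
    obtain hs | hs := hs.eq_or_lt
    · exact ⟨𝒜, h𝒜, hs.symm⟩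
    obtain ⟨A, hA, hmax⟩ := exists_max_image 𝒜 (toColex (α := Finset α)) (card_pos.1 (by omega))
    exact ih _ (erase_ssubset hA) (h𝒜.erase_max hA hmax) (by rw [card_erase_of_mem hA]; omega)

theorem isInitSeg_powersetCard_univ [Fintype α] :
    IsInitSeg (powersetCard r (univ : Finset α)) r :=
  ⟨Set.sized_powersetCard _ _, fun _ _ _ hB => mem_powersetCard_univ.2 hB.2⟩

theorem IsInitSeg.powersetCard_Iio_subset [LocallyFiniteOrderBot α] {a : α}
    (h𝒞 : IsInitSeg 𝒞 r) (hA : A ∈ 𝒞) (ha : a ∈ A) : powersetCard r (Iio a) ⊆ 𝒞 := by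
  intro B hB
  rw [mem_powersetCard] at hB
  refine h𝒞.2 hA ⟨toColex_lt_toColex_iff_exists_forall_lt.2 ⟨a, ha, ?_, ?_⟩, hB.2⟩
  · exact fun haB => (mem_Iio.1 (hB.1 haB)).false
  · exact fun b hb _ => mem_Iio.1 (hB.1 hb)

theorem IsInitSeg.subset_Iio_last {n : ℕ} {𝒞 : Finset (Finset (Fin (n + 1)))}
    (h𝒞 : IsInitSeg 𝒞 r) (hcard : #𝒞 ≤ n.choose r) : ∀ A ∈ 𝒞, A ⊆ Iio (Fin.last n) := by
  intro A hA a ha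
  rw [mem_Iio, Fin.lt_last_iff_ne_last]
  rintro rfl
  -- every `r`-set avoiding `Fin.last n` precedes `A` in colex
  have hA' : A ∉ powersetCard r (Iio (Fin.last n)) := fun hA' => by
    simpa using (mem_powersetCard.1 hA').1 ha
  have := card_le_card (insert_subset hA (h𝒞.powersetCard_Iio_subset hA ha))
  rw [card_insert_of_notMem hA', card_powersetCard, Fin.card_Iio, Fin.val_last] at this
  omega

end Colex

section KruskalKatona
variable {n r : ℕ} {𝒜 : Finset (Finset (Fin (n + 1)))}

theorem card_le_card_shadow_of_card_le_choose_s7 (h𝒜 : (𝒜 : Set (Finset (Fin (n + 1)))).Sized r)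
    (hr : n + 1 ≤ 2 * r) (hcard : #𝒜 ≤ n.choose r) : #𝒜 ≤ #(∂ 𝒜) := by
  have hinit : Colex.IsInitSeg (powersetCard r (univ : Finset (Fin (n + 1)))) r :=
    Colex.isInitSeg_powersetCard_univ
  obtain ⟨𝒞, h𝒞, h𝒞𝒜⟩ := hinit.exists_card_eq (s := #𝒜) <| by
    rw [card_powersetCard, card_univ, Fintype.card_fin]
    exact hcard.trans (Nat.choose_le_choose r n.le_succ)
  -- `𝒞` lives on `Iio (Fin.last n)`, a ground set of size `n`, where local LYM is strong enough.
  calc #𝒜 = #𝒞 := h𝒞𝒜.symm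
    _ ≤ #(∂ 𝒞) := card_le_card_shadow_of_subset (h𝒞.subset_Iio_last (h𝒞𝒜 ▸ hcard)) h𝒞.1
        (by rwa [Fin.card_Iio, Fin.val_last])
    _ ≤ #(∂ 𝒜) := kruskal_katona h𝒜 h𝒞𝒜.le h𝒞

theorem card_le_card_upShadow_of_intersecting_s7 {t : ℕ} (hn : n + 1 = 2 * t)
    (h𝒜 : (𝒜 : Set (Finset (Fin (n + 1)))).Intersecting)
    (h𝒜t : (𝒜 : Set (Finset (Fin (n + 1)))).Sized t) : #𝒜 ≤ #(∂⁺ 𝒜) := by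
  have hekr : #𝒜 ≤ n.choose t := by
    have := erdos_ko_rado h𝒜 h𝒜t (by omega)
    rwa [Nat.add_sub_cancel, Nat.choose_symm_of_eq_add (by omega : n = (t - 1) + t)] at this
  have hcompl : (𝒜ᶜˢ : Set (Finset (Fin (n + 1)))).Sized t := by
    simpa [show n + 1 - t = t by omega] using h𝒜t.compls
  simpa using card_le_card_shadow_of_card_le_choose_s7 hcompl (by omega) (by simpa using hekr)

end KruskalKatona

section IntersectingAntichain
variable {α : Type*} [DecidableEq α] {𝒜 : Finset (Finset α)} {k : ℕ}

structure IsIntersectingAntichain (𝒜 : Finset (Finset α)) : Prop where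
  isAntichain : IsAntichain (· ⊆ ·) (𝒜 : Set (Finset α))
  intersecting : (𝒜 : Set (Finset α)).Intersecting

namespace IsIntersectingAntichain

section Fintype
variable [Fintype α]

theorem exists_upShift (h𝒜 : IsIntersectingAntichain 𝒜) (hk : 2 * k + 1 ≤ Fintype.card α)
    (hsize : ∀ A ∈ 𝒜, k ≤ #A) :
    ∃ ℬ : Finset (Finset α), IsIntersectingAntichain ℬ ∧ #𝒜 ≤ #ℬ ∧ ∀ B ∈ ℬ, k + 1 ≤ #B := by
  have hmem : ∀ B ∈ 𝒜 \ 𝒜 # k ∪ ∂⁺ (𝒜 # k),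
      (B ∈ 𝒜 ∧ #B ≠ k) ∨ ∃ A ∈ 𝒜, #A = k ∧ A ⊆ B ∧ #B = #A + 1 := by
    intro B hB
    simp only [mem_union, mem_sdiff, mem_slice, mem_upShadow_iff_exists_mem_card_add_one] at hB
    grind
  have hsub : ∀ B ∈ 𝒜 \ 𝒜 # k ∪ ∂⁺ (𝒜 # k), ∃ A ∈ 𝒜, A ⊆ B := by
    intro B hB
    obtain ⟨hB, -⟩ | ⟨A, hA, -, hAB, -⟩ := hmem B hB
    exacts [⟨B, hB, subset_rfl⟩, ⟨A, hA, hAB⟩]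
  refine ⟨_, ⟨h𝒜.isAntichain.sdiff_slice_union_upShadow hsize,
    h𝒜.intersecting.of_forall_exists_le hsub⟩,
    card_le_card_sdiff_union slice_subset (h𝒜.isAntichain.disjoint_upShadow slice_subset)
      (card_le_card_upShadow_of_sized sized_slice hk), fun B hB => ?_⟩
  obtain ⟨hB, hBk⟩ | ⟨A, -, hAk, -, hcard⟩ := hmem B hB
  · have := hsize B hB; omega
  · omega

theorem exists_downShift (h𝒜 : IsIntersectingAntichain 𝒜) {m j : ℕ} (hmj : m ≤ j)
    (hα : Fintype.card α < m + j) (hsize : ∀ A ∈ 𝒜, m ≤ #A ∧ #A ≤ j + 1) :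
    ∃ ℬ : Finset (Finset α), IsIntersectingAntichain ℬ ∧ #𝒜 ≤ #ℬ ∧
      ∀ B ∈ ℬ, m ≤ #B ∧ #B ≤ j := by
  have hmem : ∀ B ∈ 𝒜 \ 𝒜 # (j + 1) ∪ ∂ (𝒜 # (j + 1)),
      (B ∈ 𝒜 ∧ #B ≠ j + 1) ∨ #B = j := by
    intro B hB
    simp only [mem_union, mem_sdiff, mem_slice, mem_shadow_iff_exists_mem_card_add_one] at hB
    grind
  have hsize' : ∀ B ∈ 𝒜 \ 𝒜 # (j + 1) ∪ ∂ (𝒜 # (j + 1)), m ≤ #B ∧ #B ≤ j := by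
    intro B hB
    obtain ⟨hB, hBj⟩ | hBj := hmem B hB
    · have := hsize B hB; omega
    · omega
  have hmeet : ∀ B C : Finset α, m ≤ #B → j ≤ #C → ¬Disjoint B C := fun B C hB hC hBC => by
    have := card_le_univ (B ∪ C)
    rw [card_union_of_disjoint hBC] at this
    omega
  refine ⟨_, ⟨h𝒜.isAntichain.sdiff_slice_union_shadow fun A hA => (hsize A hA).2,
    fun B hB C hC => ?_⟩,
    card_le_card_sdiff_union slice_subset (h𝒜.isAntichain.disjoint_shadow slice_subset)
      (card_le_card_shadow_of_subset (fun A _ => subset_univ A) sized_slice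
        (by rw [card_univ]; omega)), hsize'⟩
  obtain ⟨hB𝒜, -⟩ | hBj := hmem B hB
  · obtain ⟨hC𝒜, -⟩ | hCj := hmem C hC
    · exact h𝒜.intersecting hB𝒜 hC𝒜
    · exact hmeet B C (hsize' B hB).1 hCj.ge
  · exact fun hBC => hmeet C B (hsize' C hC).1 hBj.ge hBC.symm

theorem exists_forall_le_card (h𝒜 : IsIntersectingAntichain 𝒜) {j : ℕ}
    (hj : 2 * j ≤ Fintype.card α + 1) :
    ∃ ℬ : Finset (Finset α), IsIntersectingAntichain ℬ ∧ #𝒜 ≤ #ℬ ∧ ∀ B ∈ ℬ, j ≤ #B := by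
  induction j with
  | zero => exact ⟨𝒜, h𝒜, le_rfl, fun B _ => Nat.zero_le _⟩
  | succ j ih =>
    obtain ⟨ℬ, hℬ, h𝒜ℬ, hsize⟩ := ih (by omega)
    obtain ⟨𝒞, h𝒞, hℬ𝒞, hsize'⟩ := hℬ.exists_upShift (by omega) hsize
    exact ⟨𝒞, h𝒞, h𝒜ℬ.trans hℬ𝒞, hsize'⟩

theorem exists_forall_card_le_succ (h𝒜 : IsIntersectingAntichain 𝒜) {m d : ℕ}
    (hα : Fintype.card α ≤ 2 * m) (hsize : ∀ A ∈ 𝒜, m ≤ #A ∧ #A ≤ m + 1 + d) :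
    ∃ ℬ : Finset (Finset α), IsIntersectingAntichain ℬ ∧ #𝒜 ≤ #ℬ ∧
      ∀ B ∈ ℬ, m ≤ #B ∧ #B ≤ m + 1 := by
  induction d generalizing 𝒜 with
  | zero => exact ⟨𝒜, h𝒜, le_rfl, hsize⟩
  | succ d ih =>
    obtain ⟨ℬ, hℬ, h𝒜ℬ, hsize'⟩ := h𝒜.exists_downShift (m := m) (j := m + 1 + d) (by omega)
      (by omega) fun A hA => by have := hsize A hA; omega
    obtain ⟨𝒞, h𝒞, hℬ𝒞, hsize''⟩ := ih hℬ hsize'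
    exact ⟨𝒞, h𝒞, h𝒜ℬ.trans hℬ𝒞, hsize''⟩

end Fintype

theorem card_le_choose_of_card_eq_two_mul {n t : ℕ} {𝒜 : Finset (Finset (Fin (n + 1)))}
    (h𝒜 : IsIntersectingAntichain 𝒜) (hn : n + 1 = 2 * t) : #𝒜 ≤ (n + 1).choose (t + 1) := by
  have hcard : Fintype.card (Fin (n + 1)) = 2 * t := by rw [Fintype.card_fin, hn]
  obtain ⟨ℬ, hℬ, h𝒜ℬ, hℬt⟩ := h𝒜.exists_forall_le_card (j := t) (by omega)
  obtain ⟨𝒞, h𝒞, hℬ𝒞, h𝒞t⟩ := hℬ.exists_forall_card_le_succ (m := t) (d := t - 1) (by omega)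
    fun B hB => ⟨hℬt B hB, by have := card_le_univ B; omega⟩
  have hsplit : #𝒞 = #(𝒞 # t) + #(𝒞 # (t + 1)) := by
    rw [← card_filter_add_card_filter_not (#· = t)]
    congr 2
    exact filter_congr fun A hA => by have := h𝒞t A hA; omega
  have hlower : #(𝒞 # t) ≤ #(∂⁺ (𝒞 # t)) :=
    card_le_card_upShadow_of_intersecting_s7 hn (h𝒞.intersecting.mono slice_subset) sized_slice
  have hdisj : Disjoint (∂⁺ (𝒞 # t)) (𝒞 # (t + 1)) :=
    ((h𝒞.isAntichain.disjoint_upShadow slice_subset).mono_left slice_subset).symm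
  have hupper : ∂⁺ (𝒞 # t) ∪ 𝒞 # (t + 1) ⊆ powersetCard (t + 1) univ :=
    subset_powersetCard_univ_iff.2 <| by
      rw [coe_union]; exact Set.sized_union.2 ⟨sized_slice.upShadow, sized_slice⟩
  calc #𝒜 ≤ #𝒞 := h𝒜ℬ.trans hℬ𝒞
    _ ≤ #(∂⁺ (𝒞 # t) ∪ 𝒞 # (t + 1)) := by rw [card_union_of_disjoint hdisj]; omega
    _ ≤ (n + 1).choose (t + 1) := by simpa using card_le_card hupper

theorem card_le_choose {v : ℕ} {𝒜 : Finset (Finset (Fin v))}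
    (h𝒜 : IsIntersectingAntichain 𝒜) : #𝒜 ≤ v.choose ((v + 2) / 2) := by
  rcases v with _ | n
  · have : 𝒜 = ∅ := eq_empty_of_forall_notMem fun A hA =>
      h𝒜.intersecting.ne_bot hA (Subsingleton.elim _ _)
    simp [this]
  obtain ⟨t, ht⟩ | ⟨t, ht⟩ := (n + 1).even_or_odd
  · rw [show (n + 1 + 2) / 2 = t + 1 by omega]
    exact h𝒜.card_le_choose_of_card_eq_two_mul (by omega)
  · have := h𝒜.isAntichain.sperner
    rwa [Fintype.card_fin, show (n + 1) / 2 = t by omega,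
      Nat.choose_symm_of_eq_add (show n + 1 = t + (t + 1) by omega),
      show t + 1 = (n + 1 + 2) / 2 by omega] at this

theorem of_map {β : Type*} [DecidableEq β] {f : α ↪ β}
    (h𝒜 : IsIntersectingAntichain (𝒜.map (mapEmbedding f).toEmbedding)) :
    IsIntersectingAntichain 𝒜 := by
  refine ⟨fun A hA B hB hAB hsub => ?_, fun A hA B hB hdisj => ?_⟩
  · exact h𝒜.isAntichain (mem_map_of_mem _ hA) (mem_map_of_mem _ hB)
      ((mapEmbedding f).injective.ne hAB) (by simpa using hsub)
  · exact h𝒜.intersecting (mem_map_of_mem _ hA) (mem_map_of_mem _ hB) (by simpa using hdisj)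

theorem card_le_choose_of_forall_subset {T : Finset α} (h𝒜 : IsIntersectingAntichain 𝒜)
    (hT : ∀ A ∈ 𝒜, A ⊆ T) : #𝒜 ≤ (#T).choose ((#T + 2) / 2) := by
  set f : Fin #T ↪ α := T.equivFin.symm.toEmbedding.trans (.subtype (· ∈ T))
  have hf : T ⊆ univ.map f := fun x hx =>
    mem_map.2 ⟨T.equivFin ⟨x, hx⟩, mem_univ _, by simp [f]⟩
  have h𝒜f : 𝒜 ⊆ univ.map (mapEmbedding f).toEmbedding := fun A hA => by
    obtain ⟨B, -, rfl⟩ := subset_map_iff.1 ((hT A hA).trans hf)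
    exact mem_map_of_mem (mapEmbedding f).toEmbedding (mem_univ B)
  obtain ⟨𝒜', -, rfl⟩ := subset_map_iff.1 h𝒜f
  rw [card_map]
  exact h𝒜.of_map.card_le_choose

end IsIntersectingAntichain

end IntersectingAntichain

end Finset

section OverlapRep
variable {V : Type*} {S : V → Finset ℕ}

theorem isOverlapRep_top_iff :
    IsOverlapRep ⊤ S ↔ (∀ u v, (S u ∩ S v).Nonempty) ∧ ∀ u v, S u ⊆ S v → u = v := by
  constructor
  · rintro ⟨hne, hadj⟩
    refine ⟨fun u v => ?_, fun u v huv => ?_⟩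
    · by_cases h : u = v
      · subst h
        rw [inter_self]
        exact hne u
      · exact ((hadj u v).1 h).1
    · by_contra h
      exact ((hadj u v).1 h).2.1 huv
  · rintro ⟨hmeet, hsub⟩
    refine ⟨fun v => by simpa using hmeet v v, fun u v => ?_⟩
    rw [SimpleGraph.top_adj]
    exact ⟨fun h => ⟨hmeet u v, fun h' => h (hsub u v h'), fun h' => h (hsub v u h').symm⟩,
      by rintro ⟨-, h, -⟩ rfl; exact h subset_rfl⟩

theorem isOverlapRep_top_of_card_eq {U : Finset ℕ} {k : ℕ} (hS : Function.Injective S)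
    (hU : ∀ v, S v ⊆ U) (hk : ∀ v, #(S v) = k) (hUk : #U < 2 * k) : IsOverlapRep ⊤ S :=
  isOverlapRep_top_iff.2
    ⟨fun u v => inter_nonempty_of_card_lt_card_add_card (hU u) (hU v) (by rw [hk, hk]; omega),
      fun u v h => hS (eq_of_subset_of_card_le h (by rw [hk, hk]))⟩

theorem exists_isOverlapRep_top {n m k : ℕ} (hn : n ≤ m.choose k) (hmk : m < 2 * k) :
    ∃ S : Fin n → Finset ℕ, IsOverlapRep ⊤ S ∧ ∀ v, S v ⊆ range m := by
  obtain ⟨e⟩ : Nonempty (Fin n ↪ powersetCard k (range m)) :=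
    Function.Embedding.nonempty_of_card_le (by simpa using hn)
  have he v : (e v : Finset ℕ) ⊆ range m ∧ #(e v : Finset ℕ) = k := mem_powersetCard.1 (e v).2
  exact ⟨fun v => e v, isOverlapRep_top_of_card_eq (U := range m)
    (fun u v h => e.injective (Subtype.ext h)) (fun v => (he v).1) (fun v => (he v).2)
    (by rwa [card_range]), fun v => (he v).1⟩

theorem card_le_choose_of_isOverlapRep_top [Fintype V] (hS : IsOverlapRep ⊤ S) :
    Fintype.card V ≤ (#(univ.biUnion S)).choose ((#(univ.biUnion S) + 2) / 2) := by
  obtain ⟨hmeet, hsub⟩ := isOverlapRep_top_iff.1 hS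
  rw [← card_univ, ← card_image_of_injective univ fun u v h => hsub u v h.le]
  refine IsIntersectingAntichain.card_le_choose_of_forall_subset ⟨?_, ?_⟩ ?_
  · simp only [coe_image, coe_univ, Set.image_univ]
    rintro _ ⟨u, rfl⟩ _ ⟨v, rfl⟩ huv h
    exact huv (congrArg S (hsub u v h))
  · simp only [coe_image, coe_univ, Set.image_univ]
    rintro _ ⟨u, rfl⟩ _ ⟨v, rfl⟩
    exact not_disjoint_iff_nonempty_inter.2 (hmeet u v)
  · simp only [mem_image, mem_univ, true_and]
    rintro _ ⟨v, rfl⟩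
    exact subset_biUnion_of_mem S (mem_univ v)

theorem ncard_iUnion_eq_card_biUnion [Fintype V] :
    (⋃ v, (S v : Set ℕ)).ncard = #(univ.biUnion S) := by
  rw [← Set.ncard_coe_finset]
  simp

end OverlapRep

theorem le_choose_two_mul_add_one (n : ℕ) : n ≤ (2 * n + 1).choose ((2 * n + 1 + 2) / 2) := by
  rw [show (2 * n + 1 + 2) / 2 = n + 1 by omega,
    Nat.choose_symm_of_eq_add (show 2 * n + 1 = (n + 1) + n by omega)]
  calc n ≤ (n + 1).choose n := by rw [Nat.choose_succ_self_right]; omega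
    _ ≤ (2 * n + 1).choose n := Nat.choose_le_choose n (by omega)

theorem overlapNumber_clique_general (n : ℕ) :
    overlapNumber (⊤ : SimpleGraph (Fin n)) =
      sInf {m | n ≤ Nat.choose m ((m + 2) / 2)} := by
  set M := {m | n ≤ Nat.choose m ((m + 2) / 2)}
  have hM : M.Nonempty := ⟨2 * n + 1, le_choose_two_mul_add_one n⟩
  obtain ⟨S, hS, hSM⟩ := exists_isOverlapRep_top (Nat.sInf_mem hM) (by omega)
  apply le_antisymm
  · calc overlapNumber ⊤ ≤ (⋃ v, (S v : Set ℕ)).ncard := Nat.sInf_le ⟨S, hS, rfl⟩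
      _ = #(univ.biUnion S) := ncard_iUnion_eq_card_biUnion
      _ ≤ #(range (sInf M)) := card_le_card (biUnion_subset.2 fun v _ => hSM v)
      _ = sInf M := card_range _
  · obtain ⟨S', hS', hS'card⟩ : overlapNumber (⊤ : SimpleGraph (Fin n)) ∈ _ :=
      Nat.sInf_mem ⟨_, S, hS, rfl⟩
    refine Nat.sInf_le ?_
    show n ≤ _
    rw [← hS'card, ncard_iUnion_eq_card_biUnion]
    simpa using card_le_choose_of_isOverlapRep_top hS'

/-- The overlap number of the complete graph `K n` is the least `m` with
`n ≤ C(m, ⌊(m+2)/2⌋)`. -/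
theorem overlapNumber_clique (n : ℕ) (hn : 1 ≤ n) :
    overlapNumber (⊤ : SimpleGraph (Fin n)) =
      sInf {m | n ≤ Nat.choose m ((m + 2) / 2)} :=
  overlapNumber_clique_general n
end

section
/- For n ≥ 3, the collection given by S_i = {i, i+1} for 1 ≤ i ≤ n−1 and S_n = {1,2,...,n−1} is an overlap representation of the path P_n using n elements. -/
lemma overlaps_pair (a b : ℕ) :
    Overlaps ({a, a+1} : Finset ℕ) ({b, b+1} : Finset ℕ) ↔ a + 1 = b ∨ b + 1 = a := by
  unfold Overlaps
  constructor
  · rintro ⟨⟨x, hx⟩, hab, hba⟩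
    simp only [Finset.mem_inter, Finset.mem_insert, Finset.mem_singleton,
      Finset.insert_subset_iff, Finset.singleton_subset_iff, not_and_or] at hx hab hba
    omega
  · intro h
    refine ⟨⟨max a b, ?_⟩, ?_, ?_⟩ <;>
      simp only [Finset.mem_inter, Finset.mem_insert, Finset.mem_singleton,
        Finset.insert_subset_iff, Finset.singleton_subset_iff, not_and_or] <;> omega

lemma overlaps_pair_range (n a : ℕ) (hn : 3 ≤ n) (ha : a < n - 1) :
    Overlaps ({a, a+1} : Finset ℕ) (Finset.range (n-1)) ↔ a = n - 2 := by
  unfold Overlaps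
  constructor
  · rintro ⟨-, hab, -⟩
    simp only [Finset.insert_subset_iff, Finset.singleton_subset_iff,
      Finset.mem_range, not_and_or] at hab
    omega
  · intro h
    refine ⟨⟨a, ?_⟩, ?_, ?_⟩
    · rw [Finset.mem_inter]
      exact ⟨Finset.mem_insert_self _ _, Finset.mem_range.2 ha⟩
    · simp only [Finset.insert_subset_iff, Finset.singleton_subset_iff,
        Finset.mem_range, not_and_or]; omega
    · intro hsub
      have h0 : (0 : ℕ) ∈ Finset.range (n-1) := by simp; omega
      have := hsub h0
      simp only [Finset.mem_insert, Finset.mem_singleton] at this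
      omega

lemma overlaps_comm (A B : Finset ℕ) : Overlaps A B ↔ Overlaps B A := by
  unfold Overlaps
  rw [Finset.inter_comm]
  tauto

/-- For `n ≥ 3`, assigning `{i, i+1}` to the `i`-th vertex for `i < n - 1` and
`{0, 1, ..., n-2}` to the last vertex is an overlap representation of the path on
`n` vertices using `n` elements. -/
theorem path_explicit_rep (n : ℕ) (hn : 3 ≤ n) :
    IsOverlapRep (SimpleGraph.pathGraph n)
      (fun i : Fin n =>
        if i.1 < n - 1 then ({i.1, i.1 + 1} : Finset ℕ) else Finset.range (n - 1)) ∧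
    (⋃ i : Fin n, ((if i.1 < n - 1 then ({i.1, i.1 + 1} : Finset ℕ)
        else Finset.range (n - 1)) : Set ℕ)).ncard = n := by
  refine ⟨⟨?_, ?_⟩, ?_⟩
  · intro v
    by_cases h : v.1 < n - 1 <;> simp only [h, if_true, if_false]
    · exact ⟨v.1, Finset.mem_insert_self _ _⟩
    · rw [Finset.nonempty_range_iff]; omega
  · intro u v
    rw [SimpleGraph.pathGraph_adj]
    simp only
    by_cases hu : u.1 < n - 1 <;> by_cases hv : v.1 < n - 1 <;>
      simp only [hu, hv, if_true, if_false]
    · rw [overlaps_pair]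
    · rw [overlaps_pair_range n u.1 hn hu]
      have := v.2; omega
    · rw [overlaps_comm, overlaps_pair_range n v.1 hn hv]
      have := u.2; omega
    · have huv : u = v := Fin.ext (by have := u.2; have := v.2; omega)
      subst huv
      constructor
      · omega
      · rintro ⟨-, hs, -⟩; exact absurd (Finset.Subset.refl _) hs
  · have hU : (⋃ i : Fin n, ((if i.1 < n - 1 then ({i.1, i.1 + 1} : Finset ℕ)
        else Finset.range (n - 1)) : Set ℕ)) = ↑(Finset.range n) := by
      ext x
      simp only [Set.mem_iUnion, Finset.coe_range, Set.mem_Iio]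
      constructor
      · rintro ⟨i, hi⟩
        by_cases h : i.1 < n - 1 <;> simp only [h, if_true, if_false] at hi <;>
          simp only [Finset.coe_insert, Set.mem_insert_iff, Finset.coe_singleton,
            Set.mem_singleton_iff, Finset.coe_range, Set.mem_Iio] at hi <;> omega
      · intro hx
        by_cases h : x < n - 1
        · refine ⟨⟨n-1, by omega⟩, ?_⟩
          simp only [show ¬ (n - 1 < n - 1) from by omega, if_false,
            Finset.coe_range, Set.mem_Iio]
          exact h
        · refine ⟨⟨n-2, by omega⟩, ?_⟩
          simp only [show n - 2 < n - 1 from by omega, if_true,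
            Finset.coe_insert, Set.mem_insert_iff, Finset.coe_singleton,
            Set.mem_singleton_iff]
          omega
    rw [hU, Set.ncard_coe_finset, Finset.card_range]
end

section
/- For n ≥ 4, the overlap number of the cycle C_n on n vertices equals n − 1. -/
/-!
Deleting a vertex of `C_n` leaves a path on `n - 1` vertices, so the lower bound reduces to:
an overlap representation `C 0, …, C (m - 1)` of the path on `m` vertices uses at least `m`
elements. Non-adjacent sets are nested or disjoint, and containment in a fixed `C s` spreads
along any stretch of the path at distance at least two from `s`. If the last set lies in no
earlier non-adjacent set, then no set lies in an earlier non-adjacent one, and each `C k` with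
`0 < k < m - 1` has an element outside `C 0 ∪ … ∪ C (k - 1)`, while `C 0` has two elements.
Otherwise let `C i` be the first set containing the last one: it contains
`C (i + 2), …, C (m - 1)`, and the unions of `C 0, …, C (i - 1)` and of
`C (i + 2), …, C (m - 1)` are disjoint and are counted by the first case, applied to the path
and to its reverse (for `i = 0`, a point of `C 1` outside `C 0` replaces the first union).
-/

open Finset

theorem Overlaps.symm {A B : Finset ℕ} (h : Overlaps A B) : Overlaps B A :=
  ⟨by rw [inter_comm]; exact h.1, h.2.2, h.2.1⟩

theorem Overlaps.one_lt_card_left {A B : Finset ℕ} (h : Overlaps A B) : 1 < A.card := by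
  obtain ⟨a, ha⟩ := h.1
  obtain ⟨b, hbA, hbB⟩ := not_subset.1 h.2.1
  rw [mem_inter] at ha
  exact one_lt_card.2 ⟨a, ha.1, b, hbA, fun hab => hbB (hab ▸ ha.2)⟩

theorem subset_or_subset_of_not_overlaps {A B : Finset ℕ} (h : ¬ Overlaps A B)
    (hAB : (A ∩ B).Nonempty) : A ⊆ B ∨ B ⊆ A := by
  unfold Overlaps at h
  tauto

theorem subset_of_subset_of_overlaps {A B S : Finset ℕ} (hAS : A ⊆ S) (hAB : Overlaps A B)
    (hBS : ¬ Overlaps B S) : B ⊆ S := by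
  obtain ⟨x, hx⟩ := hAB.1
  rw [mem_inter] at hx
  refine (subset_or_subset_of_not_overlaps hBS ⟨x, mem_inter.2 ⟨hx.2, hAS hx.1⟩⟩).resolve_right ?_
  exact fun hSB => hAB.2.1 (hAS.trans hSB)

theorem overlaps_Icc_iff {a b c d : ℕ} (hab : a ≤ b) (hcd : c ≤ d) :
    Overlaps (Icc a b) (Icc c d) ↔ a ≤ d ∧ c ≤ b ∧ (a < c ∨ d < b) ∧ (c < a ∨ b < d) := by
  have hinter : (Icc a b ∩ Icc c d).Nonempty ↔ a ≤ d ∧ c ≤ b := by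
    constructor
    · rintro ⟨x, hx⟩
      simp only [mem_inter, mem_Icc] at hx
      omega
    · exact fun h => ⟨max a c, by simp only [mem_inter, mem_Icc]; omega⟩
  rw [Overlaps, hinter, Icc_subset_Icc_iff hab, Icc_subset_Icc_iff hcd]
  omega

/-- An overlap representation `C 0, …, C (m - 1)` of the path on `m` vertices; the values of `C`
at indices `≥ m` play no role. -/
structure IsPathRep (C : ℕ → Finset ℕ) (m : ℕ) : Prop where
  nonempty : ∀ i < m, (C i).Nonempty
  overlaps_succ : ∀ i, i + 1 < m → Overlaps (C i) (C (i + 1))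
  not_overlaps : ∀ i j, i + 2 ≤ j → j < m → ¬ Overlaps (C i) (C j)

namespace IsPathRep

variable {C : ℕ → Finset ℕ} {m : ℕ}

theorem mono (hC : IsPathRep C m) {m' : ℕ} (h : m' ≤ m) : IsPathRep C m' :=
  ⟨fun i hi => hC.nonempty i (by omega), fun i hi => hC.overlaps_succ i (by omega),
    fun i j hij hj => hC.not_overlaps i j hij (by omega)⟩

theorem not_overlaps_of_far (hC : IsPathRep C m) {i j : ℕ} (hij : i + 2 ≤ j ∨ j + 2 ≤ i)
    (hi : i < m) (hj : j < m) : ¬ Overlaps (C i) (C j) := by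
  rcases hij with h | h
  · exact hC.not_overlaps i j h hj
  · exact fun hov => hC.not_overlaps j i h hi hov.symm

theorem reverse (hC : IsPathRep C m) : IsPathRep (fun i => C (m - 1 - i)) m where
  nonempty i hi := hC.nonempty _ (by omega)
  overlaps_succ i hi := by
    have h := (hC.overlaps_succ (m - 1 - (i + 1)) (by omega)).symm
    rwa [show m - 1 - (i + 1) + 1 = m - 1 - i by omega] at h
  not_overlaps i j hij hj := hC.not_overlaps_of_far (by omega) (by omega) (by omega)

theorem subset_of_subset_of_far (hC : IsPathRep C m) {s lo hi : ℕ} (hs : s < m) (hhi : hi < m)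
    (hfar : hi + 2 ≤ s ∨ s + 2 ≤ lo) {j k : ℕ} (hj : lo ≤ j ∧ j ≤ hi) (hk : lo ≤ k ∧ k ≤ hi)
    (h : C j ⊆ C s) : C k ⊆ C s := by
  have step : ∀ k, lo ≤ k → k < hi → (C k ⊆ C s ↔ C (k + 1) ⊆ C s) := fun k hk₁ hk₂ =>
    ⟨fun h => subset_of_subset_of_overlaps h (hC.overlaps_succ k (by omega))
        (hC.not_overlaps_of_far (by omega) (by omega) hs),
      fun h => subset_of_subset_of_overlaps h (hC.overlaps_succ k (by omega)).symm
        (hC.not_overlaps_of_far (by omega) (by omega) hs)⟩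
  have key : ∀ k, lo ≤ k → k ≤ hi → (C k ⊆ C s ↔ C lo ⊆ C s) := by
    intro k hk
    induction k, hk using Nat.le_induction with
    | base => exact fun _ => Iff.rfl
    | succ k hk ih => exact fun hk' => (step k hk (by omega)).symm.trans (ih (by omega))
  exact (key k hk.1 hk.2).2 ((key j hj.1 hj.2).1 h)

theorem not_subset_biUnion_range {e : ℕ} (hC : IsPathRep C (e + 2))
    (hfree : ∀ k, k + 2 ≤ e + 1 → ¬ C (e + 1) ⊆ C k) : ¬ C e ⊆ (range e).biUnion C := by
  have hov := hC.overlaps_succ e (by omega)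
  intro hsub
  by_cases h₀ : C 0 ⊆ C (e + 1)
  · -- then all of `C 0, …, C (e - 1)` lie in `C (e + 1)`, which misses a point of `C e`
    obtain ⟨a, ha, ha'⟩ := not_subset.1 hov.2.1
    obtain ⟨k, hk, hak⟩ := mem_biUnion.1 (hsub ha)
    rw [mem_range] at hk
    exact ha' (hC.subset_of_subset_of_far (lo := 0) (hi := e - 1) (by omega) (by omega)
      (Or.inl (by omega)) ⟨le_rfl, by omega⟩ ⟨by omega, by omega⟩ h₀ hak)
  · -- then all of `C 0, …, C (e - 1)` are disjoint from `C (e + 1)`, which meets `C e`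
    obtain ⟨b, hb⟩ := hov.1
    rw [mem_inter] at hb
    obtain ⟨k, hk, hbk⟩ := mem_biUnion.1 (hsub hb.1)
    rw [mem_range] at hk
    rcases subset_or_subset_of_not_overlaps (hC.not_overlaps k (e + 1) (by omega) (by omega))
      ⟨b, mem_inter.2 ⟨hbk, hb.2⟩⟩ with h | h
    · exact h₀ (hC.subset_of_subset_of_far (lo := 0) (hi := e - 1) (by omega) (by omega)
        (Or.inl (by omega)) ⟨by omega, by omega⟩ ⟨le_rfl, by omega⟩ h)
    · exact hfree k (by omega) h

theorem lt_card_biUnion_range {e : ℕ} (hC : IsPathRep C (e + 1)) (he : 0 < e)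
    (hfree : ∀ k, k + 2 ≤ e → ¬ C e ⊆ C k) : e < ((range e).biUnion C).card := by
  induction e, he using Nat.le_induction with
  | base => simpa using (hC.overlaps_succ 0 (by omega)).one_lt_card_left
  | succ e he ih =>
    have hfree' : ∀ k, k + 2 ≤ e → ¬ C e ⊆ C k := fun k hk hsub =>
      hfree k (by omega) (subset_of_subset_of_overlaps hsub (hC.overlaps_succ e (by omega))
        (hC.not_overlaps_of_far (by omega) (by omega) (by omega)))
    have hnew := hC.not_subset_biUnion_range hfree
    rw [range_add_one, biUnion_insert]
    calc e + 1 < ((range e).biUnion C).card + 1 := by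
          have := ih (hC.mono (by omega)) hfree'
          omega
      _ ≤ (C e ∪ (range e).biUnion C).card :=
          card_lt_card ⟨subset_union_right, fun h => hnew (subset_union_left.trans h)⟩

theorem subset_of_absorbs_last (hC : IsPathRep C m) {i : ℕ} (hi : i + 3 ≤ m)
    (habs : C (m - 1) ⊆ C i) {l : ℕ} (hl : i + 2 ≤ l) (hlm : l < m) : C l ⊆ C i :=
  hC.subset_of_subset_of_far (lo := i + 2) (hi := m - 1) (by omega) (by omega) (Or.inr le_rfl)
    ⟨by omega, le_rfl⟩ ⟨hl, by omega⟩ habs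

theorem disjoint_of_minimal_absorber (hC : IsPathRep C m) {i : ℕ} (hi : i + 3 ≤ m)
    (habs : C (m - 1) ⊆ C i) (hmin : ∀ k < i, ¬ C (m - 1) ⊆ C k) {k l : ℕ} (hk : k < i)
    (hl : i + 2 ≤ l) (hlm : l < m) : Disjoint (C k) (C l) := by
  by_contra hne
  rcases subset_or_subset_of_not_overlaps (hC.not_overlaps k l (by omega) hlm)
    (not_disjoint_iff_nonempty_inter.1 hne) with h | h
  · have hov := hC.overlaps_succ (i - 1) (by omega)
    rw [show i - 1 + 1 = i by omega] at hov
    refine hov.2.1 ((hC.subset_of_subset_of_far (lo := 0) (hi := l - 2) hlm (by omega)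
      (Or.inl (by omega)) ⟨by omega, by omega⟩ ⟨by omega, by omega⟩ h).trans ?_)
    exact hC.subset_of_absorbs_last hi habs hl hlm
  · exact hmin k hk (hC.subset_of_subset_of_far (lo := k + 2) (hi := m - 1) (by omega) (by omega)
      (Or.inr le_rfl) ⟨by omega, by omega⟩ ⟨by omega, le_rfl⟩ h)

theorem le_card_biUnion_range_of_absorbed (hC : IsPathRep C m) {i : ℕ} (hi : i + 3 ≤ m)
    (habs : C (m - 1) ⊆ C i) (hmin : ∀ k < i, ¬ C (m - 1) ⊆ C k) :
    m ≤ ((range m).biUnion C).card := by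
  -- `T = C (i + 2) ∪ … ∪ C (m - 1)`, counted on the reversed path
  set T := (range (m - i - 2)).biUnion fun j => C (m - 1 - j)
  have hT : m - i - 1 ≤ T.card := by
    suffices m - i - 2 < T.card by omega
    refine (hC.reverse.mono (m' := m - i - 2 + 1) (by omega)).lt_card_biUnion_range (by omega)
      fun k hk hsub => ?_
    rw [show m - 1 - (m - i - 2) = i + 1 by omega] at hsub
    exact (hC.overlaps_succ i (by omega)).2.2
      (hsub.trans (hC.subset_of_absorbs_last hi habs (by omega) (by omega)))
  have hTi : T ⊆ C i := biUnion_subset.2 fun j hj =>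
    hC.subset_of_absorbs_last hi habs (by rw [mem_range] at hj; omega) (by omega)
  have hTU : T ⊆ (range m).biUnion C := biUnion_subset.2 fun j _ =>
    subset_biUnion_of_mem C (mem_range.2 (by omega))
  rcases Nat.eq_zero_or_pos i with rfl | hi₀
  · obtain ⟨c, hc₁, hc₀⟩ := not_subset.1 (hC.overlaps_succ 0 (by omega)).2.2
    calc m ≤ T.card + 1 := by omega
      _ = (insert c T).card := (card_insert_of_notMem fun hc => hc₀ (hTi hc)).symm
      _ ≤ _ := card_le_card (insert_subset (mem_biUnion.2 ⟨1, mem_range.2 (by omega), hc₁⟩) hTU)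
  · have hA := (hC.mono (m' := i + 1) (by omega)).lt_card_biUnion_range hi₀
      fun k hk hsub => hmin k (by omega) (habs.trans hsub)
    have hdisj : Disjoint ((range i).biUnion C) T := by
      simp only [T, disjoint_biUnion_left, disjoint_biUnion_right, mem_range]
      exact fun j hj k hk => hC.disjoint_of_minimal_absorber hi habs hmin hk (by omega) (by omega)
    calc m ≤ ((range i).biUnion C).card + T.card := by omega
      _ = ((range i).biUnion C ∪ T).card := (card_union_of_disjoint hdisj).symm
      _ ≤ _ := card_le_card (union_subset
          (biUnion_subset_biUnion_of_subset_left C (range_subset_range.2 (by omega))) hTU)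

theorem le_card_biUnion_range (hC : IsPathRep C m) : m ≤ ((range m).biUnion C).card := by
  by_cases habs : ∃ i, i + 3 ≤ m ∧ C (m - 1) ⊆ C i
  · obtain ⟨hi, habs'⟩ := Nat.find_spec habs
    exact hC.le_card_biUnion_range_of_absorbed hi habs'
      fun k hk hsub => Nat.find_min habs hk ⟨by omega, hsub⟩
  · simp only [not_exists, not_and] at habs
    rcases Nat.lt_or_ge m 2 with hm | hm
    · interval_cases m
      · simp
      · simpa using (hC.nonempty 0 one_pos).card_pos
    calc m = (m - 1) + 1 := by omega
      _ ≤ ((range (m - 1)).biUnion C).card :=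
          (hC.mono (m' := m - 1 + 1) (by omega)).lt_card_biUnion_range (by omega)
            fun k hk => habs k (by omega)
      _ ≤ _ := card_le_card (biUnion_subset_biUnion_of_subset_left C
          (range_subset_range.2 (by omega)))

end IsPathRep

theorem cycleGraph_adj_iff {n : ℕ} (hn : 2 ≤ n) {u v : Fin n} :
    (SimpleGraph.cycleGraph n).Adj u v ↔ (u : ℕ) = v + 1 ∨ (v : ℕ) = u + 1 ∨
      ((u : ℕ) = 0 ∧ (v : ℕ) + 1 = n) ∨ ((v : ℕ) = 0 ∧ (u : ℕ) + 1 = n) := by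
  have hsub : ∀ a b : Fin n, ((a - b : Fin n) : ℕ) = 1 ↔
      (a : ℕ) = b + 1 ∨ ((a : ℕ) = 0 ∧ (b : ℕ) + 1 = n) := by
    intro a b
    rcases le_or_gt b a with h | h
    · rw [Fin.sub_val_of_le h]
      have := Fin.le_def.1 h
      omega
    · rw [Fin.coe_sub_iff_lt.2 h]
      have := Fin.lt_def.1 h
      omega
  rw [SimpleGraph.cycleGraph_adj', hsub, hsub]
  tauto

theorem ncard_iUnion_coe {V : Type*} [Fintype V] (S : V → Finset ℕ) :
    (⋃ v, (S v : Set ℕ)).ncard = (univ.biUnion S).card := by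
  rw [← Set.ncard_coe_finset, coe_biUnion]
  simp

theorem IsOverlapRep.isPathRep_of_cycleGraph {n : ℕ} {S : Fin n → Finset ℕ}
    (hS : IsOverlapRep (SimpleGraph.cycleGraph n) S) :
    IsPathRep (fun i => if h : i < n then S ⟨i, h⟩ else ∅) (n - 1) where
  nonempty i hi := by
    rw [dif_pos (by omega)]
    exact hS.1 _
  overlaps_succ i hi := by
    rw [dif_pos (by omega), dif_pos (by omega), ← hS.2, cycleGraph_adj_iff (by omega)]
    simp
  not_overlaps i j hij hj := by
    rw [dif_pos (by omega), dif_pos (by omega), ← hS.2, cycleGraph_adj_iff (by omega)]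
    simp only
    omega

theorem IsOverlapRep.le_card_biUnion_of_cycleGraph {n : ℕ} {S : Fin n → Finset ℕ}
    (hS : IsOverlapRep (SimpleGraph.cycleGraph n) S) : n - 1 ≤ (univ.biUnion S).card := by
  refine hS.isPathRep_of_cycleGraph.le_card_biUnion_range.trans (card_le_card fun x hx => ?_)
  obtain ⟨i, hi, hx⟩ := mem_biUnion.1 hx
  rw [mem_range] at hi
  rw [dif_pos (by omega)] at hx
  exact mem_biUnion.2 ⟨_, mem_univ _, hx⟩

/-- Vertex `v` gets the paper's set `S_{v+1}`. -/
def cycleRep (n v : ℕ) : Finset ℕ :=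
  if v + 2 < n then Icc (v + 1) (v + 2) else if v + 2 = n then Icc 1 (n - 2) else Icc 2 (n - 1)

theorem isOverlapRep_cycleRep {n : ℕ} (hn : 4 ≤ n) :
    IsOverlapRep (SimpleGraph.cycleGraph n) fun v : Fin n => cycleRep n v := by
  refine ⟨fun v => ?_, fun u v => ?_⟩
  · dsimp only [cycleRep]
    split_ifs <;> exact nonempty_Icc.2 (by omega)
  · rw [cycleGraph_adj_iff (by omega)]
    dsimp only [cycleRep]
    split_ifs <;> rw [overlaps_Icc_iff (by omega) (by omega)] <;> omega

theorem biUnion_cycleRep {n : ℕ} (hn : 4 ≤ n) :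
    univ.biUnion (fun v : Fin n => cycleRep n v) = Icc 1 (n - 1) := by
  ext x
  simp only [mem_biUnion, mem_univ, true_and, mem_Icc]
  constructor
  · rintro ⟨v, hx⟩
    unfold cycleRep at hx
    split_ifs at hx <;> rw [mem_Icc] at hx <;> omega
  · intro hx
    by_cases hx' : x ≤ n - 2
    · refine ⟨⟨n - 2, by omega⟩, ?_⟩
      simp only [cycleRep]
      rw [if_neg (by omega), if_pos (by omega), mem_Icc]
      omega
    · refine ⟨⟨n - 1, by omega⟩, ?_⟩
      simp only [cycleRep]
      rw [if_neg (by omega), if_neg (by omega), mem_Icc]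
      omega

/-- For `n ≥ 4`, the overlap number of the cycle on `n` vertices is `n - 1`. -/
theorem overlapNumber_cycle (n : ℕ) (hn : 4 ≤ n) :
    overlapNumber (SimpleGraph.cycleGraph n) = n - 1 := by
  have hrep : n - 1 ∈ {N | ∃ S : Fin n → Finset ℕ,
      IsOverlapRep (SimpleGraph.cycleGraph n) S ∧ (⋃ v, (S v : Set ℕ)).ncard = N} :=
    ⟨_, isOverlapRep_cycleRep hn, by
      rw [ncard_iUnion_coe, biUnion_cycleRep hn, Nat.card_Icc]
      omega⟩
  refine le_antisymm (Nat.sInf_le hrep) (le_csInf ⟨_, hrep⟩ ?_)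
  rintro N ⟨S, hS, rfl⟩
  rw [ncard_iUnion_coe]
  exact hS.le_card_biUnion_of_cycleGraph
end

section
/- For every graph G on n vertices, φ(G) ≤ ⌊n²/4⌋ + n. -/
lemma egp_aux {V : Type*} (G : SimpleGraph V) :
    ∀ n : ℕ, ∀ s : Finset V, s.card ≤ n →
      ∃ C : Finset (Finset V), (∀ K ∈ C, G.IsClique (K : Set V)) ∧
        (∀ u ∈ s, ∀ v ∈ s, G.Adj u v → ∃ K ∈ C, u ∈ K ∧ v ∈ K) ∧
        C.card ≤ s.card ^ 2 / 4 := by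
  classical
  intro n
  induction n with
  | zero =>
    intro s hs
    refine ⟨∅, by simp, ?_, by simp⟩
    have : s = ∅ := Finset.card_eq_zero.mp (Nat.le_zero.mp hs)
    subst this; simp
  | succ n ih =>
    intro s hs
    by_cases hedge : ∃ u ∈ s, ∃ v ∈ s, G.Adj u v
    · obtain ⟨u, hu, v, hv, huv⟩ := hedge
      have hne : u ≠ v := G.ne_of_adj huv
      set s' := s \ {u, v} with hs'
      have hsub : ({u, v} : Finset V) ⊆ s := by
        intro x hx; simp at hx; rcases hx with h | h <;> subst h <;> assumption
      have hcard' : s'.card = s.card - 2 := by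
        rw [hs', Finset.card_sdiff_of_subset hsub, Finset.card_insert_of_notMem (by simp [hne]),
          Finset.card_singleton]
      have h2 : 2 ≤ s.card := by
        calc 2 = ({u, v} : Finset V).card := by
                rw [Finset.card_insert_of_notMem (by simp [hne]), Finset.card_singleton]
          _ ≤ s.card := Finset.card_le_card hsub
      obtain ⟨C', hC'clique, hC'cover, hC'card⟩ := ih s' (by omega)
      set Kf : V → Finset V := fun w =>
        if G.Adj w u then (if G.Adj w v then {u, v, w} else {u, w})
        else (if G.Adj w v then {v, w} else {w}) with hKf
      set C : Finset (Finset V) := (C' ∪ s'.image Kf) ∪ {({u, v} : Finset V)} with hC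
      have hKfmem : ∀ w, w ∈ Kf w := by
        intro w; rw [hKf]; dsimp only
        split <;> split <;> simp
      have hKfu : ∀ w, G.Adj w u → u ∈ Kf w := by
        intro w h; rw [hKf]; dsimp only
        rw [if_pos h]; split <;> simp
      have hKfv : ∀ w, G.Adj w v → v ∈ Kf w := by
        intro w h; rw [hKf]; dsimp only
        by_cases h1 : G.Adj w u
        · rw [if_pos h1, if_pos h]; simp
        · rw [if_neg h1, if_pos h]; simp
      have hKfclique : ∀ w, G.IsClique ((Kf w : Finset V) : Set V) := by
        intro w; rw [hKf]; dsimp only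
        split <;> split
        · rename_i h1 h2
          simp only [Finset.coe_insert, Finset.coe_singleton]
          rw [SimpleGraph.isClique_insert]
          refine ⟨?_, ?_⟩
          · rw [SimpleGraph.isClique_insert]
            refine ⟨by simp, ?_⟩
            intro b hb _; simp at hb; subst hb; exact h2.symm
          · intro b hb _
            simp at hb
            rcases hb with h | h <;> subst h
            · exact huv
            · exact h1.symm
        · rename_i h1 h2
          simp only [Finset.coe_insert, Finset.coe_singleton]
          exact SimpleGraph.isClique_pair.mpr fun _ => h1.symm
        · rename_i h1 h2
          simp only [Finset.coe_insert, Finset.coe_singleton]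
          exact SimpleGraph.isClique_pair.mpr fun _ => h2.symm
        · simp
      have huvC : ({u, v} : Finset V) ∈ C := by
        rw [hC]; simp
      have hmemC : ∀ w ∈ s', Kf w ∈ C := by
        intro w hw; rw [hC]
        simp only [Finset.mem_union, Finset.mem_singleton, Finset.mem_image]
        exact Or.inl (Or.inr ⟨w, hw, rfl⟩)
      have key : ∀ x ∈ ({u, v} : Finset V), ∀ w ∈ s', G.Adj x w →
          ∃ K ∈ C, x ∈ K ∧ w ∈ K := by
        intro x hx w hw hxw
        refine ⟨Kf w, hmemC w hw, ?_, hKfmem w⟩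
        simp only [Finset.mem_insert, Finset.mem_singleton] at hx
        rcases hx with rfl | rfl
        · exact hKfu w hxw.symm
        · exact hKfv w hxw.symm
      refine ⟨C, ?_, ?_, ?_⟩
      · intro K hK
        rw [hC] at hK
        simp only [Finset.mem_union, Finset.mem_singleton, Finset.mem_image] at hK
        rcases hK with (hK | ⟨w, _, rfl⟩) | rfl
        · exact hC'clique K hK
        · exact hKfclique w
        · simp only [Finset.coe_insert, Finset.coe_singleton]
          exact SimpleGraph.isClique_pair.mpr fun _ => huv
      · intro a ha b hb hab
        by_cases ha' : a ∈ ({u, v} : Finset V)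
        · by_cases hb' : b ∈ ({u, v} : Finset V)
          · refine ⟨{u, v}, huvC, ?_, ?_⟩ <;> assumption
          · have hb'' : b ∈ s' := Finset.mem_sdiff.mpr ⟨hb, hb'⟩
            exact key a ha' b hb'' hab
        · have ha'' : a ∈ s' := Finset.mem_sdiff.mpr ⟨ha, ha'⟩
          by_cases hb' : b ∈ ({u, v} : Finset V)
          · obtain ⟨K, hK, h1, h2⟩ := key b hb' a ha'' hab.symm
            exact ⟨K, hK, h2, h1⟩
          · have hb'' : b ∈ s' := Finset.mem_sdiff.mpr ⟨hb, hb'⟩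
            obtain ⟨K, hK, h1, h2⟩ := hC'cover a ha'' b hb'' hab
            refine ⟨K, ?_, h1, h2⟩
            rw [hC]; simp only [Finset.mem_union]; exact Or.inl (Or.inl hK)
      · have h1 : C.card ≤ C'.card + s'.card + 1 := by
          calc C.card ≤ (C' ∪ s'.image Kf).card + ({({u, v} : Finset V)} : Finset (Finset V)).card :=
                Finset.card_union_le _ _
            _ ≤ C'.card + (s'.image Kf).card + 1 := by
                rw [Finset.card_singleton]
                exact Nat.add_le_add_right (Finset.card_union_le _ _) 1
            _ ≤ C'.card + s'.card + 1 := by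
                exact Nat.add_le_add_right (Nat.add_le_add_left (Finset.card_image_le) _) 1
        rw [hcard'] at hC'card h1
        have final : (s.card - 2) ^ 2 / 4 + (s.card - 2) + 1 ≤ s.card ^ 2 / 4 := by
          obtain ⟨k, hk⟩ : ∃ k, s.card = k + 2 := ⟨s.card - 2, by omega⟩
          rw [hk]
          have e : (k + 2) ^ 2 = k ^ 2 + 4 * k + 4 := by ring
          simp only [Nat.add_sub_cancel]
          rw [e]
          generalize k ^ 2 = a
          omega
        omega
    · refine ⟨∅, by simp, ?_, by simp⟩
      intro a ha b hb hab
      exact absurd ⟨a, ha, b, hb, hab⟩ hedge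


/-- For every graph `G` on `n` vertices, `φ(G) ≤ ⌊n²/4⌋ + n`. -/
theorem overlapNumber_le {V : Type*} [Fintype V] (G : SimpleGraph V) :
    overlapNumber G ≤ Fintype.card V ^ 2 / 4 + Fintype.card V := by
  unfold overlapNumber IsOverlapRep Overlaps
  classical
  obtain ⟨C, hclique, hcover, hcard⟩ := egp_aux G (Fintype.card V) Finset.univ (by simp)
  rw [Finset.card_univ] at hcard
  let eV : V ↪ ℕ := (Fintype.equivFin V).toEmbedding.trans (Fin.valEmbedding)
  let eC : Finset V ↪ ℕ := (Fintype.equivFin (Finset V)).toEmbedding.trans (Fin.valEmbedding)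
  set S : V → Finset ℕ := fun v =>
    insert (2 * eV v + 1) ((C.filter (fun K => v ∈ K)).image (fun K => 2 * eC K)) with hS
  have hmemS : ∀ v x, x ∈ S v ↔ x = 2 * eV v + 1 ∨ ∃ K ∈ C, v ∈ K ∧ x = 2 * eC K := by
    intro v x
    rw [hS]
    simp only [Finset.mem_insert, Finset.mem_image, Finset.mem_filter]
    constructor
    · rintro (h | ⟨K, ⟨h1, h2⟩, h3⟩)
      · exact Or.inl h
      · exact Or.inr ⟨K, h1, h2, h3.symm⟩
    · rintro (h | ⟨K, h1, h2, h3⟩)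
      · exact Or.inl h
      · exact Or.inr ⟨K, ⟨h1, h2⟩, h3.symm⟩
  have hodd : ∀ u v, 2 * eV u + 1 ∈ S v → u = v := by
    intro u v h
    rw [hmemS] at h
    rcases h with h | ⟨K, _, _, h⟩
    · exact eV.injective (by omega)
    · omega
  have hnsub : ∀ u v : V, u ≠ v → ¬ S u ⊆ S v := by
    intro u v huv hsub
    have := hodd u v (hsub (by rw [hmemS]; exact Or.inl rfl))
    exact huv this
  have hrep : (∀ v, (S v).Nonempty) ∧ ∀ u v, G.Adj u v ↔
      (((S u) ∩ (S v)).Nonempty ∧ ¬ S u ⊆ S v ∧ ¬ S v ⊆ S u) := by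
    constructor
    · intro v; rw [hS]; exact Finset.insert_nonempty _ _
    · intro u v
      constructor
      · intro hadj
        have hne := G.ne_of_adj hadj
        obtain ⟨K, hK, huK, hvK⟩ := hcover u (Finset.mem_univ u) v (Finset.mem_univ v) hadj
        refine ⟨⟨2 * eC K, Finset.mem_inter.mpr ⟨?_, ?_⟩⟩, hnsub u v hne, hnsub v u hne.symm⟩
        · rw [hmemS]; exact Or.inr ⟨K, hK, huK, rfl⟩
        · rw [hmemS]; exact Or.inr ⟨K, hK, hvK, rfl⟩
      · rintro ⟨⟨x, hx⟩, hsub, _⟩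
        rw [Finset.mem_inter] at hx
        obtain ⟨hxu, hxv⟩ := hx
        have hne : u ≠ v := fun h => hsub (h ▸ Finset.Subset.refl _)
        rw [hmemS] at hxu hxv
        rcases hxu with h1 | ⟨K, hK, huK, rfl⟩
        · rcases hxv with h2 | ⟨K, _, _, h2⟩
          · exact absurd (eV.injective (by omega)) hne
          · omega
        · rcases hxv with h2 | ⟨K', hK', hvK', h2⟩
          · omega
          · have : K = K' := eC.injective (by omega)
            subst this
            exact hclique K hK huK hvK' hne
  have hsubset : (⋃ v, (S v : Set ℕ)) ⊆
      ((C.image (fun K => 2 * eC K)) ∪ (Finset.univ.image (fun v : V => 2 * eV v + 1)) :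
        Finset ℕ) := by
    intro x hx
    simp only [Set.mem_iUnion, Finset.mem_coe] at hx
    obtain ⟨v, hv⟩ := hx
    rw [hmemS] at hv
    simp only [Finset.coe_union, Set.mem_union, Finset.coe_image, Set.mem_image,
      Finset.mem_coe]
    rcases hv with h | ⟨K, hK, _, h⟩
    · exact Or.inr ⟨v, by simp, h.symm⟩
    · exact Or.inl ⟨K, hK, h.symm⟩
  have hncard : (⋃ v, (S v : Set ℕ)).ncard ≤ Fintype.card V ^ 2 / 4 + Fintype.card V := by
    calc (⋃ v, (S v : Set ℕ)).ncard
        ≤ (((C.image (fun K => 2 * eC K)) ∪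
            (Finset.univ.image (fun v : V => 2 * eV v + 1)) : Finset ℕ) : Set ℕ).ncard :=
          Set.ncard_le_ncard hsubset (Finset.finite_toSet _)
      _ = ((C.image (fun K => 2 * eC K)) ∪
            (Finset.univ.image (fun v : V => 2 * eV v + 1)) : Finset ℕ).card :=
          Set.ncard_coe_finset _
      _ ≤ (C.image (fun K => 2 * eC K)).card +
            (Finset.univ.image (fun v : V => 2 * eV v + 1)).card := Finset.card_union_le _ _
      _ ≤ C.card + Fintype.card V := by
          gcongr
          · exact Finset.card_image_le
          · calc (Finset.univ.image (fun v : V => 2 * eV v + 1)).card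
                ≤ (Finset.univ : Finset V).card := Finset.card_image_le
              _ = Fintype.card V := Finset.card_univ
      _ ≤ Fintype.card V ^ 2 / 4 + Fintype.card V := by omega
  exact le_trans (Nat.sInf_le ⟨S, hrep, rfl⟩) hncard
end
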